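/- arXiv:2508.11585 — 8 statements merged into one kernel-verified Lean document; each statement's English description precedes it below -/
import Mathlib

section
/- Let n and k be positive integers and let 𝒦_{n,k} be the family of all graphs with at most n vertices that are disjoint unions of cliques each having at most k vertices. Then 𝒰(𝒦_{n,k}) = ∑_{i=1}^{k} ⌊n/i⌋, i.e., the minimum number of vertices of an induced-universal graph for 𝒦_{n,k} equals ∑_{i=1}^{k} ⌊n/i⌋. -/
/-- The minimum number of vertices of an induced-universal graph for a family `F`
of graphs (each graph given together with its number of vertices).  A graph `U` is
induced-universal for `F` if every graph of `F` is isomorphic to an induced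
subgraph of `U`, i.e. admits a graph embedding into `U`. -/
noncomputable def uNum (F : Set (Σ m : ℕ, SimpleGraph (Fin m))) : ℕ :=
  sInf {N | ∃ U : SimpleGraph (Fin N), ∀ G ∈ F, Nonempty (G.2 ↪g U)}

/-- The family `𝒦_{n,k}` of all graphs with at most `n` vertices that are disjoint
unions of cliques, each clique having at most `k` vertices: adjacency is
"transitive" (each connected component is a clique) and every connected component
has at most `k` vertices. -/
def cliqueUnionFamily (n k : ℕ) : Set (Σ m : ℕ, SimpleGraph (Fin m)) :=
  {G | G.1 ≤ n ∧
    (∀ u v w : Fin G.1, G.2.Adj u v → G.2.Adj v w → u ≠ w → G.2.Adj u w) ∧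
    (∀ v : Fin G.1, {w | G.2.Reachable v w}.ncard ≤ k)}

/-!
Upper bound: the disjoint union, over `j`, of cliques of size `min k ⌊n / (j + 1)⌋` has
`∑_{i ≤ k} ⌊n / i⌋` vertices, and every member of `𝒦_{n,k}` embeds into it. By Hall's theorem
its components can be sent injectively to cliques `j` with `j < n / (component size)`, because
`s` components of size at least `t` satisfy `s t ≤ n`.

Lower bound: a universal graph contains, for each `i ≤ k`, `⌊n / i⌋` pairwise disjoint and
non-adjacent `i`-cliques. Choosing representatives greedily by increasing clique size, a clique
of size `s` contains at most one already chosen vertex per smaller size, hence a free vertex, so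
all `∑_{i ≤ k} ⌊n / i⌋` cliques get distinct representatives.
-/

open Finset

namespace SimpleGraph

variable {V W ι α β : Type*}

def ofFibers (f : V → α) : SimpleGraph V where
  Adj u v := f u = f v ∧ u ≠ v
  symm := ⟨fun _ _ h => ⟨h.1.symm, h.2.symm⟩⟩
  loopless := ⟨fun _ h => h.2 rfl⟩

@[simp]
theorem ofFibers_adj {f : V → α} {u v : V} : (ofFibers f).Adj u v ↔ f u = f v ∧ u ≠ v :=
  Iff.rfl

theorem ofFibers_reachable {f : V → α} {u v : V} : (ofFibers f).Reachable u v ↔ f u = f v := by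
  refine ⟨fun h => ?_, fun h => ?_⟩
  · obtain ⟨p⟩ := h
    induction p with
    | nil => rfl
    | cons h _ ih => exact h.1.trans ih
  · rcases eq_or_ne u v with rfl | hne
    · rfl
    · exact Adj.reachable ⟨h, hne⟩

theorem Reachable.eq_or_adj_of_transitive {G : SimpleGraph V}
    (htr : ∀ u v w, G.Adj u v → G.Adj v w → u ≠ w → G.Adj u w) {u v : V}
    (h : G.Reachable u v) : u = v ∨ G.Adj u v := by
  obtain ⟨p⟩ := h
  induction p with
  | nil => exact Or.inl rfl
  | @cons a _ c hab _ ih =>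
    rcases ih with rfl | h
    · exact Or.inr hab
    · rcases eq_or_ne a c with rfl | hac
      · exact Or.inl rfl
      · exact Or.inr (htr _ _ _ hab h hac)

theorem eq_ofFibers_connectedComponentMk_of_transitive {G : SimpleGraph V}
    (htr : ∀ u v w, G.Adj u v → G.Adj v w → u ≠ w → G.Adj u w) :
    G = ofFibers G.connectedComponentMk := by
  ext u v
  refine ⟨fun h => ⟨ConnectedComponent.sound h.reachable, h.ne⟩, fun ⟨h, hne⟩ => ?_⟩
  exact ((ConnectedComponent.exact h).eq_or_adj_of_transitive htr).resolve_left hne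

theorem nonempty_embedding_ofFibers [Fintype V] [Fintype W] [DecidableEq α] [DecidableEq β]
    {f : V → α} {g : W → β} (ψ : α ↪ β)
    (hcard : ∀ a, Fintype.card {v // f v = a} ≤ Fintype.card {w // g w = ψ a}) :
    Nonempty (ofFibers f ↪g ofFibers g) := by
  let e a := (Function.Embedding.nonempty_of_card_le (hcard a)).some
  let φ : V ↪ W := (Equiv.sigmaFiberEquiv f).symm.toEmbedding.trans
    ((Function.Embedding.sigmaMap ψ e).trans (Equiv.sigmaFiberEquiv g).toEmbedding)
  have hφ : ∀ v, g (φ v) = ψ (f v) := fun v => (e (f v) ⟨v, rfl⟩).2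
  exact ⟨⟨φ, fun {u v} => by simp [hφ, φ.injective.ne_iff]⟩⟩


theorem exists_injective_mem_of_cliques [Fintype ι] (U : SimpleGraph V)
    (C : ι → Finset V) (hne : ∀ a, (C a).Nonempty) (hclique : ∀ a, U.IsClique (C a : Set V))
    (hsep : ∀ a b, a ≠ b → #(C a) = #(C b) → ∀ u ∈ C a, ∀ w ∈ C b, u ≠ w ∧ ¬U.Adj u w) :
    ∃ f : ι → V, Function.Injective f ∧ ∀ a, f a ∈ C a := by
  classical
  cases isEmpty_or_nonempty ι
  · exact ⟨isEmptyElim, fun a => isEmptyElim a, fun a => isEmptyElim a⟩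
  have : Nonempty V := (hne (Classical.arbitrary ι)).to_subtype.map Subtype.val
  suffices ∀ s : Finset ι, ∃ f : ι → V, Set.InjOn f s ∧ ∀ a ∈ s, f a ∈ C a by
    obtain ⟨f, hinj, hmem⟩ := this univ
    exact ⟨f, by simpa using hinj, fun a => hmem a (mem_univ a)⟩
  intro s
  induction s using Finset.induction_on_max_value (fun a => #(C a)) with
  | empty => exact ⟨fun _ => Classical.arbitrary V, by simp, by simp⟩
  | insert a s has hmax ih =>
    obtain ⟨f, hinj, hmem⟩ := ih
    -- The members of `s` whose chosen vertex lies in `C a` have pairwise distinct sizes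
    -- smaller than `#(C a)`, so they block fewer than `#(C a)` vertices of `C a`.
    set T := s.filter fun x => f x ∈ C a
    have hT : #T < #(C a) := by
      have hsizes : #T ≤ #(Ico 1 #(C a)) := by
        refine card_le_card_of_injOn (fun x => #(C x)) (fun x hx => ?_) (fun x hx y hy hxy => ?_)
        · obtain ⟨hxs, hxa⟩ := mem_filter.mp hx
          refine mem_Ico.mpr ⟨card_pos.mpr (hne x), (hmax x hxs).lt_of_ne fun h => ?_⟩
          exact (hsep x a (ne_of_mem_of_not_mem hxs has) h (f x) (hmem x hxs) (f x) hxa).1 rfl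
        · obtain ⟨hxs, hxa⟩ := mem_filter.mp hx
          obtain ⟨hys, hya⟩ := mem_filter.mp hy
          by_contra hne'
          have hfxy := hsep x y hne' hxy (f x) (hmem x hxs) (f y) (hmem y hys)
          exact hfxy.2 (hclique a hxa hya hfxy.1)
      rw [Nat.card_Ico] at hsizes
      have := card_pos.mpr (hne a)
      omega
    obtain ⟨v, hva, hvT⟩ := exists_mem_notMem_of_card_lt_card (card_image_le.trans_lt hT)
    have hvs : v ∉ f '' s := by
      rintro ⟨x, hxs, rfl⟩
      exact hvT (mem_image_of_mem f (mem_filter.mpr ⟨hxs, hva⟩))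
    have heq : Set.EqOn (Function.update f a v) f s :=
      fun x hx => Function.update_of_ne (ne_of_mem_of_not_mem hx has) _ _
    refine ⟨Function.update f a v, ?_, ?_⟩
    · rw [coe_insert, Set.injOn_insert (by simpa using has), heq.image_eq]
      exact ⟨hinj.congr heq.symm, by simpa using hvs⟩
    · intro x hx
      rcases eq_or_ne x a with rfl | hxa
      · simpa using hva
      · rw [Function.update_of_ne hxa]
        exact hmem x ((mem_insert.mp hx).resolve_left hxa)

theorem card_le_card_of_cliques [Fintype ι] [Fintype V] (U : SimpleGraph V)
    (C : ι → Finset V) (hne : ∀ a, (C a).Nonempty) (hclique : ∀ a, U.IsClique (C a : Set V))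
    (hsep : ∀ a b, a ≠ b → #(C a) = #(C b) → ∀ u ∈ C a, ∀ w ∈ C b, u ≠ w ∧ ¬U.Adj u w) :
    Fintype.card ι ≤ Fintype.card V := by
  obtain ⟨f, hf, -⟩ := exists_injective_mem_of_cliques U C hne hclique hsep
  exact Fintype.card_le_of_injective f hf

end SimpleGraph

theorem exists_injective_lt_div_of_sum_le {ι : Type*} [Fintype ι] {n : ℕ} (sz : ι → ℕ)
    (hpos : ∀ a, 0 < sz a) (hsum : ∑ a, sz a ≤ n) :
    ∃ φ : ι → ℕ, Function.Injective φ ∧ ∀ a, φ a < n / sz a := by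
  simp_rw [← mem_range]
  refine (all_card_le_biUnion_card_iff_exists_injective _).mp fun s => ?_
  rcases s.eq_empty_or_nonempty with rfl | hs
  · simp
  -- Hall's condition: `#s` parts of size at least `sz a₀` fit into `n` points.
  obtain ⟨a₀, ha₀, hmin⟩ := s.exists_min_image sz hs
  have : #s * sz a₀ ≤ n :=
    calc #s * sz a₀ = ∑ _ ∈ s, sz a₀ := by rw [sum_const, smul_eq_mul]
      _ ≤ ∑ a ∈ s, sz a := sum_le_sum hmin
      _ ≤ ∑ a, sz a := sum_le_sum_of_subset (subset_univ s)
      _ ≤ n := hsum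
  calc #s ≤ #(range (n / sz a₀)) := by rwa [card_range, Nat.le_div_iff_mul_le (hpos a₀)]
    _ ≤ _ := card_le_card (subset_biUnion_of_mem (fun a => range (n / sz a)) ha₀)


open SimpleGraph

theorem ofFibers_mem_cliqueUnionFamily {n k m : ℕ} {α : Type*} (f : Fin m → α) (hm : m ≤ n)
    (hf : ∀ a, {v | f v = a}.ncard ≤ k) : ⟨m, ofFibers f⟩ ∈ cliqueUnionFamily n k := by
  refine ⟨hm, fun u v w huv hvw huw => ⟨huv.1.trans hvw.1, huw⟩, fun v => ?_⟩
  simpa only [ofFibers_reachable, eq_comm (a := f v)] using hf (f v)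

def blockGraph (a b : ℕ) : SimpleGraph (Fin (a * b)) :=
  ofFibers fun v => (finProdFinEquiv.symm v).1

theorem blockGraph_adj {a b : ℕ} {p q : Fin a × Fin b} :
    (blockGraph a b).Adj (finProdFinEquiv p) (finProdFinEquiv q) ↔ p.1 = q.1 ∧ p ≠ q := by
  simp only [blockGraph, ofFibers_adj, Equiv.symm_apply_apply, ne_eq,
    EmbeddingLike.apply_eq_iff_eq]

theorem blockGraph_mem_cliqueUnionFamily {n k a b : ℕ} (hn : a * b ≤ n) (hk : b ≤ k) :
    ⟨a * b, blockGraph a b⟩ ∈ cliqueUnionFamily n k := by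
  refine ofFibers_mem_cliqueUnionFamily _ hn fun j => ?_
  have : {v : Fin (a * b) | (finProdFinEquiv.symm v).1 = j} =
      Set.range fun t : Fin b => finProdFinEquiv (j, t) := by
    ext v
    constructor
    · rintro rfl
      exact ⟨(finProdFinEquiv.symm v).2, by simp only [Prod.mk.eta, Equiv.apply_symm_apply]⟩
    · rintro ⟨t, rfl⟩
      exact congrArg Prod.fst (finProdFinEquiv.symm_apply_apply (j, t))
  rw [this, Set.ncard_range_of_injective, Nat.card_eq_fintype_card, Fintype.card_fin]
  · exact hk
  · exact fun t t' h => by simpa [-finProdFinEquiv_symm_apply] using h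

abbrev BlockIndex (n k : ℕ) : Type := Σ i : Icc 1 k, Fin (n / i)

theorem card_blockIndex (n k : ℕ) : Fintype.card (BlockIndex n k) = ∑ i ∈ Icc 1 k, n / i := by
  simp only [Fintype.card_sigma, Fintype.card_fin]
  exact sum_coe_sort (Icc 1 k) (fun i => n / i)

-- Vertex `⟨i, j⟩` lies in the `j`-th clique, which therefore has `min k ⌊n / (j + 1)⌋` vertices.
def universalGraph (n k : ℕ) : SimpleGraph (BlockIndex n k) :=
  ofFibers fun x => (x.2 : ℕ)

theorem le_card_universalGraph_fiber {n k s j : ℕ} (hs : s ≤ k) (hj : j < n / s) :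
    s ≤ Fintype.card {x : BlockIndex n k // (x.2 : ℕ) = j} := by
  refine Fintype.card_fin s ▸ Fintype.card_le_of_injective
    (fun t => ⟨⟨⟨t + 1, mem_Icc.mpr ⟨by omega, by omega⟩⟩,
      ⟨j, hj.trans_le (Nat.div_le_div_left t.isLt t.succ_pos)⟩⟩, rfl⟩) fun t t' h => ?_
  simp only [Subtype.mk.injEq, Sigma.mk.injEq] at h
  exact Fin.ext (by omega)

theorem nonempty_embedding_universalGraph {n k : ℕ} {G : Σ m : ℕ, SimpleGraph (Fin m)}
    (hG : G ∈ cliqueUnionFamily n k) : Nonempty (G.2 ↪g universalGraph n k) := by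
  classical
  obtain ⟨m, G⟩ := G
  obtain ⟨hm, htr, hcomp⟩ := hG
  rw [eq_ofFibers_connectedComponentMk_of_transitive htr]
  let sz (c : G.ConnectedComponent) := Fintype.card {v // G.connectedComponentMk v = c}
  have hpos (c : G.ConnectedComponent) : 0 < sz c := by
    obtain ⟨v, rfl⟩ := c.exists_rep
    exact Fintype.card_pos_iff.mpr ⟨⟨v, rfl⟩⟩
  have hle (c : G.ConnectedComponent) : sz c ≤ k := by
    obtain ⟨v, rfl⟩ := c.exists_rep
    have hsupp : {w | G.connectedComponentMk w = G.connectedComponentMk v} =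
        {w | G.Reachable v w} :=
      Set.ext fun w => ConnectedComponent.eq.trans reachable_comm
    calc sz (G.connectedComponentMk v)
        = {w | G.connectedComponentMk w = G.connectedComponentMk v}.ncard :=
          (Nat.card_eq_fintype_card.symm.trans (Nat.card_coe_set_eq _))
      _ ≤ k := hsupp ▸ hcomp v
  have hsum : ∑ c, sz c ≤ n := by
    rw [← Fintype.card_sigma, Fintype.card_congr (Equiv.sigmaFiberEquiv _), Fintype.card_fin]
    exact hm
  obtain ⟨φ, hφ, hlt⟩ := exists_injective_lt_div_of_sum_le sz hpos hsum
  exact nonempty_embedding_ofFibers ⟨φ, hφ⟩ fun c => le_card_universalGraph_fiber (hle c) (hlt c)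

theorem card_blockIndex_le {n k : ℕ} {V : Type*} [Fintype V] (U : SimpleGraph V)
    (hU : ∀ G ∈ cliqueUnionFamily n k, Nonempty (G.2 ↪g U)) :
    Fintype.card (BlockIndex n k) ≤ Fintype.card V := by
  classical
  have φ (i : Icc 1 k) : blockGraph (n / i) i ↪g U :=
    (hU _ (blockGraph_mem_cliqueUnionFamily (Nat.div_mul_le_self n i) (mem_Icc.mp i.2).2)).some
  have hadj (i : Icc 1 k) (p q : Fin (n / i) × Fin i) :
      U.Adj (φ i (finProdFinEquiv p)) (φ i (finProdFinEquiv q)) ↔ p.1 = q.1 ∧ p ≠ q :=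
    (φ i).map_adj_iff.trans blockGraph_adj
  have hinj (i : Icc 1 k) : Function.Injective fun p => φ i (finProdFinEquiv p) :=
    (φ i).injective.comp finProdFinEquiv.injective
  -- The `j`-th clique of the copy of `blockGraph (n / i) i`.
  let C (x : BlockIndex n k) : Finset V := univ.image fun t => φ x.1 (finProdFinEquiv (x.2, t))
  have hcard (x : BlockIndex n k) : #(C x) = x.1 :=
    (card_image_of_injective univ ((hinj x.1).comp (Prod.mk_right_injective x.2))).trans
      (by rw [card_univ, Fintype.card_fin])
  refine card_le_card_of_cliques U C (fun x => ?_) (fun x => ?_) ?_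
  · have : 0 < (x.1 : ℕ) := (mem_Icc.mp x.1.2).1
    exact univ_nonempty_iff.mpr ⟨⟨0, this⟩⟩ |>.image _
  · intro u hu w hw huw
    simp only [C, coe_image, coe_univ, Set.image_univ, Set.mem_range] at hu hw
    obtain ⟨t, rfl⟩ := hu
    obtain ⟨t', rfl⟩ := hw
    exact (hadj _ _ _).mpr ⟨rfl, fun h => huw (by rw [h])⟩
  · rintro ⟨i, j⟩ ⟨i', j'⟩ hne hsize u hu w hw
    obtain rfl : i = i' := Subtype.ext (by simpa only [hcard] using hsize)
    have hjj : j ≠ j' := fun h => hne (h ▸ rfl)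
    simp only [C, mem_image, mem_univ, true_and] at hu hw
    obtain ⟨t, rfl⟩ := hu
    obtain ⟨t', rfl⟩ := hw
    exact ⟨fun h => hjj (congrArg Prod.fst (hinj i h)), fun h => hjj ((hadj _ _ _).mp h).1⟩

theorem stmt0_general (n k : ℕ) :
    uNum (cliqueUnionFamily n k) = ∑ i ∈ Finset.Icc 1 k, n / i := by
  let e := Fintype.equivFinOfCardEq (card_blockIndex n k)
  have hmem : ∑ i ∈ Icc 1 k, n / i ∈
      {N | ∃ U : SimpleGraph (Fin N), ∀ G ∈ cliqueUnionFamily n k, Nonempty (G.2 ↪g U)} :=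
    ⟨(universalGraph n k).map e.toEmbedding, fun G hG =>
      ⟨(nonempty_embedding_universalGraph hG).some.trans (Iso.map e _).toEmbedding⟩⟩
  refine le_antisymm (Nat.sInf_le hmem) (le_csInf ⟨_, hmem⟩ fun N ⟨U, hU⟩ => ?_)
  simpa only [card_blockIndex, Fintype.card_fin] using card_blockIndex_le U hU

theorem stmt0 (n k : ℕ) (hn : 0 < n) (hk : 0 < k) :
    uNum (cliqueUnionFamily n k) = ∑ i ∈ Finset.Icc 1 k, n / i :=
  stmt0_general n k
end

section
/- Let F be an infinite graph family, and for each n let u_n be the number of isomorphism classes of n-vertex graphs in F. Suppose limsup_{n→∞} (u_n)^{1/n} ≥ g for some real g > e/2. Let c > 1 be the real solution of c^c/(c−1)^{c−1} = g. Then for every ε with 0 < ε < g/e − 1/2, the inequality 𝒰(F_n) > (c−ε)·n holds for infinitely many n, where F_n is the subfamily of n-vertex graphs of F. -/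
open Filter

/-- The setoid on `n`-vertex graphs whose equivalence classes are the
isomorphism classes. -/
def isoSetoid (n : ℕ) : Setoid (SimpleGraph (Fin n)) where
  r G H := Nonempty (G ≃g H)
  iseqv := ⟨fun _ => ⟨SimpleGraph.Iso.refl⟩, fun ⟨e⟩ => ⟨e.symm⟩,
    fun ⟨e⟩ ⟨f⟩ => ⟨e.trans f⟩⟩

/-- The number `u_n` of isomorphism classes of graphs in a family `F` of
`n`-vertex graphs. -/
noncomputable def numIsoClasses {n : ℕ} (F : Set (SimpleGraph (Fin n))) : ℕ :=
  ((fun G => Quotient.mk (isoSetoid n) G) '' F).ncard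

/-- The minimum number of vertices of an induced-universal graph for a family
of `n`-vertex graphs. -/
noncomputable def uNumN {n : ℕ} (F : Set (SimpleGraph (Fin n))) : ℕ :=
  sInf {N | ∃ U : SimpleGraph (Fin N), ∀ G ∈ F, Nonempty (G ↪g U)}

/-!
If `U` is induced-universal for `F_n` on `N` vertices, every graph of `F_n` is determined up to
isomorphism by the vertex set of one of its copies in `U`, so `u_n ≤ C(N, n)`. Keeping one term of
the binomial expansion of `b ^ N = (1 + (b - 1)) ^ N` shows that `N ≤ b n` forces
`C(N, n) ≤ φ(b) ^ n` with `φ(b) = b ^ b / (b - 1) ^ (b - 1)`, and `φ` is strictly increasing on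
`[1, ∞)` because `log φ(x) = x log x - (x - 1) log (x - 1)` has derivative `log (x / (x - 1)) > 0`.
For `b = max (c - ε) 1 < c` this gives `φ(b) < φ(c) = g`, so `𝒰(F_n) ≤ (c - ε) n` would force
`u_n ^ (1/n) ≤ φ(b)`, which fails for infinitely many `n` since the limsup is at least `g`.
-/

open Real

namespace SimpleGraph

variable {ι V W X : Type*}

def disjointUnion (G : ι → SimpleGraph V) : SimpleGraph (ι × V) where
  Adj p q := p.1 = q.1 ∧ (G p.1).Adj p.2 q.2
  symm := ⟨by rintro ⟨i, v⟩ ⟨j, w⟩ ⟨rfl, h⟩; exact ⟨rfl, h.symm⟩⟩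
  loopless := ⟨by rintro ⟨i, v⟩ ⟨-, h⟩; exact h.ne rfl⟩

def Embedding.toDisjointUnion (G : ι → SimpleGraph V) (i : ι) : G i ↪g disjointUnion G :=
  ⟨⟨fun v => (i, v), Prod.mk_right_injective i⟩, by simp [disjointUnion]⟩

theorem exists_universal_fin (V : Type*) [Finite V] :
    ∃ N, ∃ U : SimpleGraph (Fin N), ∀ G : SimpleGraph V, Nonempty (G ↪g U) := by
  obtain ⟨N, ⟨e⟩⟩ := Finite.exists_equiv_fin (SimpleGraph V × V)
  exact ⟨N, (disjointUnion id).map e.toEmbedding,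
    fun G => ⟨(Iso.map e _).toEmbedding.comp (Embedding.toDisjointUnion id G)⟩⟩

theorem Embedding.nonempty_iso_of_range_eq {G : SimpleGraph V} {H : SimpleGraph W}
    {U : SimpleGraph X} (f : G ↪g U) (f' : H ↪g U) (h : Set.range f = Set.range f') :
    Nonempty (G ≃g H) := by
  have e := f.isoInduceRange
  rw [h] at e
  exact ⟨e.trans f'.isoInduceRange.symm⟩

end SimpleGraph

theorem numIsoClasses_le_choose {n N : ℕ} {F : Set (SimpleGraph (Fin n))}
    {U : SimpleGraph (Fin N)} (hU : ∀ G ∈ F, Nonempty (G ↪g U)) :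
    numIsoClasses F ≤ N.choose n := by
  classical
  let S : SimpleGraph (Fin n) → Finset (Fin N) := fun G =>
    if h : Nonempty (G ↪g U) then Finset.univ.map h.some.toEmbedding else ∅
  have hS : ∀ G (h : Nonempty (G ↪g U)), S G = Finset.univ.map h.some.toEmbedding :=
    fun G h => dif_pos h
  have hemb : ∀ q ∈ (fun G => Quotient.mk (isoSetoid n) G) '' F, Nonempty (q.out ↪g U) := by
    rintro _ ⟨G, hG, rfl⟩
    obtain ⟨e⟩ := Quotient.mk_out (s := isoSetoid n) G
    exact ⟨(hU G hG).some.comp e.toEmbedding⟩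
  calc numIsoClasses F ≤ ((Finset.univ : Finset (Fin N)).powersetCard n : Set (Finset (Fin N))).ncard := by
        refine Set.ncard_le_ncard_of_injOn (fun q => S q.out) (fun q hq => ?_)
          (fun q hq q' hq' hqq' => ?_) (Set.toFinite _)
        · simp [hS _ (hemb q hq)]
        · have hrange := congrArg ((↑) : Finset (Fin N) → Set (Fin N)) hqq'
          simp only [hS _ (hemb q hq), hS _ (hemb q' hq'), Finset.coe_map, Finset.coe_univ,
            Set.image_univ] at hrange
          exact Quotient.out_equiv_out.mp
            (SimpleGraph.Embedding.nonempty_iso_of_range_eq _ _ hrange)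
    _ = N.choose n := by rw [Set.ncard_coe_finset, Finset.card_powersetCard, Finset.card_univ,
          Fintype.card_fin]

theorem exists_universal_uNumN {n : ℕ} (F : Set (SimpleGraph (Fin n))) :
    ∃ U : SimpleGraph (Fin (uNumN F)), ∀ G ∈ F, Nonempty (G ↪g U) := by
  obtain ⟨N, U, hU⟩ := SimpleGraph.exists_universal_fin (Fin n)
  exact Nat.sInf_mem (s := {N | ∃ U : SimpleGraph (Fin N), ∀ G ∈ F, Nonempty (G ↪g U)})
    ⟨N, U, fun G _ => hU G⟩

theorem numIsoClasses_le_choose_uNumN {n : ℕ} (F : Set (SimpleGraph (Fin n))) :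
    numIsoClasses F ≤ (uNumN F).choose n :=
  (exists_universal_uNumN F).elim fun _ hU => numIsoClasses_le_choose hU

noncomputable def chooseGrowth (b : ℝ) : ℝ := b ^ b / (b - 1) ^ (b - 1)

theorem strictMonoOn_mul_log_sub_mul_log :
    StrictMonoOn (fun x : ℝ => x * log x - (x - 1) * log (x - 1)) (Set.Ici 1) := by
  have hcont : Continuous fun x : ℝ => x * log x - (x - 1) * log (x - 1) :=
    continuous_mul_log.sub (continuous_mul_log.comp (continuous_id.sub continuous_const))
  refine strictMonoOn_of_deriv_pos (convex_Ici 1) hcont.continuousOn fun x hx => ?_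
  rw [interior_Ici, Set.mem_Ioi] at hx
  have hderiv : HasDerivAt (fun x : ℝ => x * log x - (x - 1) * log (x - 1))
      (log x + 1 - (log (x - 1) + 1)) x := by
    have h := (hasDerivAt_mul_log (by linarith : x - 1 ≠ 0)).comp x ((hasDerivAt_id x).sub_const 1)
    exact (hasDerivAt_mul_log (by linarith : x ≠ 0)).sub (by simpa [Function.comp_def] using h)
  rw [hderiv.deriv]
  linarith [log_lt_log (by linarith : 0 < x - 1) (by linarith : x - 1 < x)]

theorem chooseGrowth_eq_exp {x : ℝ} (hx : 1 ≤ x) :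
    chooseGrowth x = exp (x * log x - (x - 1) * log (x - 1)) := by
  rcases hx.eq_or_lt with rfl | hx
  · simp [chooseGrowth]
  rw [chooseGrowth, rpow_def_of_pos (by linarith), rpow_def_of_pos (by linarith), ← exp_sub]
  ring_nf

theorem chooseGrowth_strictMonoOn : StrictMonoOn chooseGrowth (Set.Ici 1) :=
  fun x hx y hy hxy => by
    rw [chooseGrowth_eq_exp hx, chooseGrowth_eq_exp hy]
    exact exp_lt_exp.2 (strictMonoOn_mul_log_sub_mul_log hx hy hxy)

theorem chooseGrowth_nonneg {b : ℝ} (hb : 1 ≤ b) : 0 ≤ chooseGrowth b :=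
  div_nonneg (rpow_nonneg (by linarith) _) (rpow_nonneg (by linarith) _)

theorem choose_le_add_pow_div {x y : ℝ} (hx : 0 < x) (hy : 0 < y) (N n : ℕ) :
    (N.choose n : ℝ) ≤ (x + y) ^ N / (x ^ n * y ^ (N - n)) := by
  rw [le_div_iff₀ (by positivity), add_pow]
  rcases lt_or_ge N n with hNn | hnN
  · rw [Nat.choose_eq_zero_of_lt hNn, Nat.cast_zero, zero_mul]
    positivity
  calc (N.choose n : ℝ) * (x ^ n * y ^ (N - n)) = x ^ n * y ^ (N - n) * N.choose n := by ring
    _ ≤ ∑ k ∈ Finset.range (N + 1), x ^ k * y ^ (N - k) * N.choose k :=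
      Finset.single_le_sum (f := fun k => x ^ k * y ^ (N - k) * N.choose k)
        (fun k _ => by positivity) (Finset.mem_range_succ_iff.2 hnN)

theorem choose_le_chooseGrowth_pow {b : ℝ} (hb : 1 ≤ b) {N n : ℕ} (hN : (N : ℝ) ≤ b * n) :
    (N.choose n : ℝ) ≤ chooseGrowth b ^ n := by
  rcases lt_or_ge N n with hNn | hnN
  · rw [Nat.choose_eq_zero_of_lt hNn, Nat.cast_zero]
    exact pow_nonneg (chooseGrowth_nonneg hb) n
  rcases hb.eq_or_lt with rfl | hb
  · have : N = n := le_antisymm (by exact_mod_cast (one_mul (n : ℝ)) ▸ hN) hnN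
    simp [this, chooseGrowth]
  have hb0 : 0 < b - 1 := sub_pos.2 hb
  have hratio : 1 ≤ b / (b - 1) := (one_le_div hb0).2 (by linarith)
  calc (N.choose n : ℝ) ≤ (1 + (b - 1)) ^ N / (1 ^ n * (b - 1) ^ (N - n)) :=
        choose_le_add_pow_div one_pos hb0 N n
    _ = b ^ n * (b / (b - 1)) ^ (N - n) := by
        rw [add_sub_cancel, one_pow, one_mul, ← pow_mul_pow_sub b hnN, div_pow, mul_div_assoc]
    _ ≤ b ^ n * ((b / (b - 1)) ^ (b - 1)) ^ n := by
        gcongr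
        rw [← rpow_natCast, ← rpow_mul_natCast (by positivity)]
        refine rpow_le_rpow_of_exponent_le hratio ?_
        rw [Nat.cast_sub hnN]
        linarith
    _ = chooseGrowth b ^ n := by
        rw [← mul_pow, div_rpow (by positivity) hb0.le, rpow_sub_one (by positivity), chooseGrowth]
        field_simp

theorem stmt3_general (F : ∀ n : ℕ, Set (SimpleGraph (Fin n))) (g c : ℝ)
    (hlimsup : g ≤ Filter.limsup
      (fun n : ℕ => ((numIsoClasses (F n) : ℝ)) ^ ((n : ℝ)⁻¹)) Filter.atTop)
    (hc : 1 < c) (hceq : c ^ c / (c - 1) ^ (c - 1) = g) :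
    ∀ ε : ℝ, 0 < ε → ε < g / Real.exp 1 - 1 / 2 →
      ∀ m : ℕ, ∃ n : ℕ, m ≤ n ∧ (c - ε) * (n : ℝ) < (uNumN (F n) : ℝ) := by
  intro ε hε _ m
  set b := max (c - ε) 1
  have hb : 1 ≤ b := le_max_right _ _
  have hgrowth : chooseGrowth b < g :=
    hceq ▸ chooseGrowth_strictMonoOn hb hc.le (max_lt (by linarith) hc)
  have hfreq : ∃ᶠ n in atTop, chooseGrowth b < (numIsoClasses (F n) : ℝ) ^ (n : ℝ)⁻¹ :=
    frequently_lt_of_lt_limsup (isCoboundedUnder_le_of_le atTop fun n => by positivity)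
      (hgrowth.trans_le hlimsup)
  obtain ⟨n, hlt, hmn⟩ := (hfreq.and_eventually (eventually_gt_atTop m)).exists
  refine ⟨n, hmn.le, lt_of_not_ge fun hle => hlt.not_ge ?_⟩
  have hN : (uNumN (F n) : ℝ) ≤ b * n :=
    hle.trans (mul_le_mul_of_nonneg_right (le_max_left _ _) n.cast_nonneg)
  rw [rpow_inv_le_iff_of_pos (by positivity) (chooseGrowth_nonneg hb)
    (by exact_mod_cast (Nat.zero_le m).trans_lt hmn), rpow_natCast]
  exact (Nat.cast_le.2 (numIsoClasses_le_choose_uNumN (F n))).trans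
    (choose_le_chooseGrowth_pow hb hN)

theorem stmt3 (F : ∀ n : ℕ, Set (SimpleGraph (Fin n))) (g c : ℝ)
    (hg : Real.exp 1 / 2 < g)
    (hlimsup : g ≤ Filter.limsup
      (fun n : ℕ => ((numIsoClasses (F n) : ℝ)) ^ ((n : ℝ)⁻¹)) Filter.atTop)
    (hc : 1 < c) (hceq : c ^ c / (c - 1) ^ (c - 1) = g) :
    ∀ ε : ℝ, 0 < ε → ε < g / Real.exp 1 - 1 / 2 →
      ∀ m : ℕ, ∃ n : ℕ, m ≤ n ∧ (c - ε) * (n : ℝ) < (uNumN (F n) : ℝ) :=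
  stmt3_general F g c hlimsup hc hceq
end

section
/- The function f(x) = x^x/(x−1)^{x−1} is strictly increasing on the interval (1, ∞), and for every real x > 1 it satisfies f(x) ≤ e·x − e/2. Consequently, for every g > e/2, the real solution c > 1 of f(c) = g satisfies c ≥ g/e + 1/2. -/
/-!
Writing `x ^ x / (x - 1) ^ (x - 1) = exp (x log x - (x - 1) log (x - 1))`, the exponent has
derivative `log x - log (x - 1) > 0`, which gives monotonicity. The exponent also equals
`1 + ∫ t in x - 1..x, log t`, and by concavity of `log` (integrate its tangent line at the
midpoint) this integral is at most `log (x - 1/2)`; exponentiating gives the bound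
`e (x - 1/2)`, and the last claim is this bound read at `x = c`.
-/

open Real Set

lemma Real.log_le_log_add_sub_div {t m : ℝ} (ht : 0 < t) (hm : 0 < m) :
    log t ≤ log m + (t - m) / m := by
  have h := log_le_sub_one_of_pos (div_pos ht hm)
  rw [log_div ht.ne' hm.ne'] at h
  rw [sub_div, div_self hm.ne']
  linarith

lemma integral_log_le_mul_log_midpoint {a b : ℝ} (ha : 0 < a) (hab : a ≤ b) :
    ∫ t in a..b, log t ≤ (b - a) * log ((a + b) / 2) := by
  set m := (a + b) / 2
  have hm : 0 < m := by simp only [m]; linarith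
  have htangent : ∫ t in a..b, log t ≤ ∫ t in a..b, (log m + (t - m) / m) :=
    intervalIntegral.integral_mono_on hab intervalIntegral.intervalIntegrable_log'
      (by apply Continuous.intervalIntegrable; fun_prop)
      fun t ht => log_le_log_add_sub_div (ha.trans_le ht.1) hm
  have hline : ∫ t in a..b, (log m + (t - m) / m) = (b - a) * log m := by
    have hlin : (fun t => log m + (t - m) / m) = fun t => t / m + (log m - 1) := by
      funext t; field_simp; ring
    rw [hlin, intervalIntegral.integral_add (by apply Continuous.intervalIntegrable; fun_prop)
      intervalIntegrable_const, intervalIntegral.integral_div, integral_id,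
      intervalIntegral.integral_const, smul_eq_mul]
    field_simp
    ring
  exact htangent.trans hline.le

lemma rpow_self_div_rpow_sub_one_eq_exp {x : ℝ} (hx : 1 < x) :
    x ^ x / (x - 1) ^ (x - 1) = exp (x * log x - (x - 1) * log (x - 1)) := by
  rw [rpow_def_of_pos (by linarith), rpow_def_of_pos (by linarith), ← exp_sub]
  ring_nf

lemma hasDerivAt_mul_log_sub_mul_log_sub_one {x : ℝ} (hx : 1 < x) :
    HasDerivAt (fun y => y * log y - (y - 1) * log (y - 1)) (log x - log (x - 1)) x := by
  have hself := hasDerivAt_mul_log (by linarith : x ≠ 0)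
  have hshift := (hasDerivAt_mul_log (by linarith : x - 1 ≠ 0)).comp x
    ((hasDerivAt_id x).sub_const 1)
  exact (hself.sub hshift).congr_deriv (by ring)

lemma strictMonoOn_mul_log_sub_mul_log_sub_one :
    StrictMonoOn (fun y => y * log y - (y - 1) * log (y - 1)) (Ioi 1) := by
  apply strictMonoOn_of_deriv_pos (convex_Ioi 1)
  · exact fun x hx => (hasDerivAt_mul_log_sub_mul_log_sub_one hx).continuousAt.continuousWithinAt
  · intro x hx
    rw [interior_Ioi] at hx
    rw [(hasDerivAt_mul_log_sub_mul_log_sub_one hx).deriv, sub_pos]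
    exact log_lt_log (by linarith [mem_Ioi.mp hx]) (by linarith)

lemma strictMonoOn_rpow_self_div_rpow_sub_one :
    StrictMonoOn (fun x : ℝ => x ^ x / (x - 1) ^ (x - 1)) (Ioi 1) := by
  intro a ha b hb hab
  simp only [rpow_self_div_rpow_sub_one_eq_exp ha, rpow_self_div_rpow_sub_one_eq_exp hb]
  exact exp_lt_exp.mpr (strictMonoOn_mul_log_sub_mul_log_sub_one ha hb hab)

lemma rpow_self_div_rpow_sub_one_le {x : ℝ} (hx : 1 < x) :
    x ^ x / (x - 1) ^ (x - 1) ≤ exp 1 * (x - 1 / 2) := by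
  have hexponent : x * log x - (x - 1) * log (x - 1) ≤ 1 + log (x - 1 / 2) := by
    have h := integral_log_le_mul_log_midpoint (by linarith : 0 < x - 1) (sub_one_lt x).le
    rw [integral_log, sub_sub_cancel, one_mul] at h
    have hmid : (x - 1 + x) / 2 = x - 1 / 2 := by ring
    rw [hmid] at h
    linarith
  calc x ^ x / (x - 1) ^ (x - 1) ≤ exp (1 + log (x - 1 / 2)) := by
        rw [rpow_self_div_rpow_sub_one_eq_exp hx]
        exact exp_le_exp.mpr hexponent
    _ = exp 1 * (x - 1 / 2) := by rw [exp_add, exp_log (by linarith)]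

theorem stmt5 :
    StrictMonoOn (fun x : ℝ => x ^ x / (x - 1) ^ (x - 1)) (Set.Ioi (1 : ℝ)) ∧
    (∀ x : ℝ, 1 < x →
      x ^ x / (x - 1) ^ (x - 1) ≤ Real.exp 1 * x - Real.exp 1 / 2) ∧
    (∀ g c : ℝ, Real.exp 1 / 2 < g → 1 < c →
      c ^ c / (c - 1) ^ (c - 1) = g → g / Real.exp 1 + 1 / 2 ≤ c) := by
  refine ⟨strictMonoOn_rpow_self_div_rpow_sub_one,
    fun x hx => (rpow_self_div_rpow_sub_one_le hx).trans_eq (by ring), ?_⟩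
  intro g c _ hc hfc
  have hbound := rpow_self_div_rpow_sub_one_le hc
  rw [hfc] at hbound
  rw [div_add' _ _ _ (exp_pos 1).ne', div_le_iff₀ (exp_pos 1)]
  linarith
end

section
/- Let s, t, k be positive integers with t ≤ A(s, 2k−2, k), and let F be a family of t graphs, each having exactly n vertices and each being p-almost equitably k-colorable. Then 𝒰(F) ≤ s·⌈(n−p)/k⌉ + t·p. -/
/-- A graph `G` on a finite vertex type has an equitable `k`-coloring if it has a
proper coloring with `k` colors in which the sizes of any two color classes differ
by at most one. -/
def EquitablyColorable {W : Type*} [Fintype W] (G : SimpleGraph W) (k : ℕ) : Prop :=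
  ∃ c : W → Fin k, (∀ u v : W, G.Adj u v → c u ≠ c v) ∧
    ∀ i j : Fin k, (Finset.univ.filter (fun v => c v = i)).card ≤
      (Finset.univ.filter (fun v => c v = j)).card + 1

/-- A graph `G` is `p`-almost equitably `k`-colorable if there is a set `X` of at
most `p` vertices such that the induced subgraph `G \ X` has an equitable
`k`-coloring. -/
def AlmostEquitablyColorable {V : Type*} [Fintype V] [DecidableEq V]
    (G : SimpleGraph V) (p k : ℕ) : Prop :=
  ∃ X : Finset V, X.card ≤ p ∧
    EquitablyColorable (G.induce (↑(Xᶜ) : Set V)) k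

/-- `designNumber s k` is the coding-theoretic quantity `A(s, 2k-2, k)`: the maximum
number of `k`-element subsets of an `s`-element set that pairwise intersect in at
most one element. -/
noncomputable def designNumber (s k : ℕ) : ℕ :=
  sSup {m | ∃ 𝒞 : Finset (Finset (Fin s)), 𝒞.card = m ∧ (∀ C ∈ 𝒞, C.card = k) ∧
    ∀ C ∈ 𝒞, ∀ D ∈ 𝒞, C ≠ D → (C ∩ D).card ≤ 1}
/-!
Put `q = ⌈(n - p) / k⌉`. Once at most `p` vertices are deleted, the colour classes of an
equitable `k`-colouring have at most `q` elements each, apart from an overflow which, together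
with the deleted vertices, has at most `p` elements. So every `F i` embeds into a grid with `k`
rows (its colour classes) and `q` columns plus `p` spare points, with adjacent grid vertices in
different rows. Take `t` blocks of `k` points in an `s`-set that pairwise share at most one
point, send the rows of `F i` to the rows indexed by the `i`-th block of an `s × q` grid, and give
each graph its own spare points. Two graphs then share at most one row, so no edge of one lands
inside the image of another, and the union of the images contains each `F i` as an induced
subgraph.
-/

open Finset Function

theorem Finset.sum_tsub_le_of_forall_le_add_one {κ : Type*} [Fintype κ] {c : κ → ℕ}
    (hc : ∀ i j, c i ≤ c j + 1) {q m : ℕ} (hsum : ∑ i, c i ≤ q * Fintype.card κ + m) :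
    ∑ i, (c i - q) ≤ m := by
  by_cases hsmall : ∀ i, c i ≤ q
  · simp [Nat.sub_eq_zero_of_le (hsmall _)]
  · push Not at hsmall
    obtain ⟨i₀, hi₀⟩ := hsmall
    have hlarge : ∀ i, q ≤ c i := fun i => by have := hc i₀ i; omega
    have hsplit : ∑ i, (c i - q) + q * Fintype.card κ = ∑ i, c i := by
      rw [mul_comm, ← smul_eq_mul, ← card_univ, ← sum_const, ← sum_add_distrib]
      exact sum_congr rfl fun i _ => Nat.sub_add_cancel (hlarge i)
    omega

theorem exists_embedding_of_equitable {α κ : Type*} [Fintype α] [Fintype κ] [DecidableEq κ]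
    (c : α → κ) (hc : ∀ i j, #{a | c a = i} ≤ #{a | c a = j} + 1) {q m : ℕ}
    (hα : Fintype.card α ≤ q * Fintype.card κ + m) :
    ∃ g : α ↪ (κ × Fin q) ⊕ Fin m, ∀ a j r, g a = .inl (j, r) → c a = j := by
  have hfiber (j : κ) : Nonempty ({a // c a = j} ↪ Fin q ⊕ Fin (#{a | c a = j} - q)) :=
    Embedding.nonempty_of_card_le <| by
      simp only [Fintype.card_subtype, Fintype.card_sum, Fintype.card_fin]
      omega
  have φ (j : κ) := (hfiber j).some
  have hover : Nonempty ((Σ j, Fin (#{a | c a = j} - q)) ↪ Fin m) := by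
    refine Embedding.nonempty_of_card_le ?_
    simp only [Fintype.card_sigma, Fintype.card_fin]
    refine sum_tsub_le_of_forall_le_add_one hc ?_
    rwa [← card_eq_sum_card_fiberwise (fun _ _ => mem_univ _), card_univ]
  obtain ⟨ψ⟩ := hover
  refine ⟨(Equiv.sigmaFiberEquiv c).symm.toEmbedding
      |>.trans (Embedding.sigmaMap (Embedding.refl κ) φ)
      |>.trans (Equiv.sigmaSumDistrib _ _).toEmbedding
      |>.trans (Embedding.sumMap (Equiv.sigmaEquivProd κ (Fin q)).toEmbedding ψ), ?_⟩
  have hrow : ∀ (z : Σ j, Fin q ⊕ Fin (#{a | c a = j} - q)) j r,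
      Embedding.sumMap (Equiv.sigmaEquivProd κ (Fin q)).toEmbedding ψ
        (Equiv.sigmaSumDistrib _ _ z) = .inl (j, r) → z.1 = j := by
    rintro ⟨j', r' | x⟩ j r hz <;> simp_all [Equiv.sigmaSumDistrib]
  exact fun a j r h => hrow _ j r h

def SimpleGraph.IsGridLayout {V κ R P : Type*} (G : SimpleGraph V) (g : V → (κ × R) ⊕ P) :
    Prop :=
  ∀ ⦃u v⦄, G.Adj u v → ∀ ⦃j j' r r'⦄, g u = .inl (j, r) → g v = .inl (j', r') → j ≠ j'

theorem AlmostEquitablyColorable.exists_gridLayout {V : Type*} [Fintype V] [DecidableEq V]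
    {G : SimpleGraph V} {p k q : ℕ} (hG : AlmostEquitablyColorable G p k)
    (hV : Fintype.card V ≤ q * k + p) :
    ∃ g : V ↪ (Fin k × Fin q) ⊕ Fin p, G.IsGridLayout g := by
  obtain ⟨X, hXp, c, hc, hequit⟩ := hG
  have hA : Fintype.card (↑(Xᶜ) : Set V) ≤ q * Fintype.card (Fin k) + (p - #X) := by
    have : #X ≤ Fintype.card V := X.card_le_univ
    simp only [coe_compl, Fintype.card_compl_set, coe_sort_coe, Fintype.card_coe,
      Fintype.card_fin]
    omega
  obtain ⟨e, he⟩ := exists_embedding_of_equitable c hequit hA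
  obtain ⟨eX⟩ : Nonempty ({u // u ∉ (↑(Xᶜ) : Set V)} ↪ Fin #X) :=
    Embedding.nonempty_of_card_le (by simp)
  obtain ⟨eP⟩ : Nonempty (Fin (p - #X) ⊕ Fin #X ↪ Fin p) :=
    Embedding.nonempty_of_card_le (by simp only [Fintype.card_sum, Fintype.card_fin]; omega)
  refine ⟨(Equiv.sumCompl (· ∈ (↑(Xᶜ) : Set V))).symm.toEmbedding
      |>.trans (Embedding.sumMap e eX)
      |>.trans (Equiv.sumAssoc _ _ _).toEmbedding
      |>.trans (Embedding.sumMap (Embedding.refl _) eP), ?_⟩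
  have hrow : ∀ z j r, (Embedding.sumMap e eX |>.trans (Equiv.sumAssoc _ _ _).toEmbedding
      |>.trans (Embedding.sumMap (Embedding.refl _) eP)) z = .inl (j, r) →
      ∃ a, z = .inl a ∧ c a = j := by
    rintro (a | b) j r h
    · refine ⟨a, rfl, he a j r ?_⟩
      rcases hea : e a with _ | _ <;> simp_all
    · simp at h
  intro u v huv j j' r r' hu hv
  obtain ⟨a, ha, rfl⟩ := hrow _ j r hu
  obtain ⟨b, hb, rfl⟩ := hrow _ j' r' hv
  simp only [Equiv.coe_toEmbedding, Equiv.symm_apply_eq] at ha hb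
  subst ha hb
  exact hc a b huv

theorem exists_embeddings_of_le_designNumber {s k t : ℕ} (ht : t ≤ designNumber s k) :
    ∃ b : Fin t → (Fin k ↪ Fin s),
      ∀ i j, i ≠ j → (Set.range (b i) ∩ Set.range (b j)).Subsingleton := by
  obtain ⟨𝒞, h𝒞, hk, hinter⟩ : designNumber s k ∈ {m | ∃ 𝒞 : Finset (Finset (Fin s)),
      #𝒞 = m ∧ (∀ C ∈ 𝒞, #C = k) ∧ ∀ C ∈ 𝒞, ∀ D ∈ 𝒞, C ≠ D → #(C ∩ D) ≤ 1} :=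
    Nat.sSup_mem ⟨0, ∅, by simp⟩
      ⟨Fintype.card (Finset (Fin s)), by rintro m ⟨𝒞, rfl, -⟩; exact card_le_univ 𝒞⟩
  obtain ⟨ι⟩ : Nonempty (Fin t ↪ 𝒞) := Embedding.nonempty_of_card_le (by simpa [h𝒞])
  refine ⟨fun i => ((ι i : Finset (Fin s)).orderEmbOfFin (hk _ (ι i).2)).toEmbedding,
    fun i j hij => ?_⟩
  simp only [RelEmbedding.coe_toEmbedding, range_orderEmbOfFin, ← coe_inter]
  refine card_le_one_iff_subsingleton.mp (hinter _ (ι i).2 _ (ι j).2 ?_)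
  exact fun h => hij (ι.injective (Subtype.ext h))

namespace SimpleGraph

def Embedding.toISupMap {ι W : Type*} {V : ι → Type*} {G : ∀ i, SimpleGraph (V i)}
    {f : ∀ i, V i ↪ W}
    (hf : ∀ i j, i ≠ j → ∀ u v x y, (G j).Adj u v → f j u = f i x → f j v = f i y →
      (G i).Adj x y) (i : ι) :
    G i ↪g ⨆ j, (G j).map (f j) where
  toEmbedding := f i
  map_rel_iff' {x y} := by
    simp only [iSup_adj, map_adj]
    refine ⟨fun ⟨j, u, v, huv, hu, hv⟩ => ?_, fun h => ⟨i, x, y, h, rfl, rfl⟩⟩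
    by_cases hij : i = j
    · subst hij
      rwa [← (f i).injective hu, ← (f i).injective hv]
    · exact hf i j hij u v x y huv hu hv

end SimpleGraph

def layoutEmbedding {κ σ R P ι : Type*} (b : κ ↪ σ) (i : ι) :
    (κ × R) ⊕ P ↪ (σ × R) ⊕ (ι × P) :=
  Embedding.sumMap (b.prodMap (Embedding.refl R)) (Embedding.sectR i P)

theorem layoutEmbedding_eq_layoutEmbedding {κ σ R P ι : Type*} {b b' : κ ↪ σ} {i i' : ι}
    (hii' : i ≠ i') {z z' : (κ × R) ⊕ P} (h : layoutEmbedding b i z = layoutEmbedding b' i' z') :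
    ∃ c c' r, z = .inl (c, r) ∧ z' = .inl (c', r) ∧ b c = b' c' := by
  rcases z with ⟨c, r⟩ | x <;> rcases z' with ⟨c', r'⟩ | x' <;>
    simp_all [layoutEmbedding]

theorem SimpleGraph.IsGridLayout.false_of_adj_of_layoutEmbedding_eq {V κ σ R P ι : Type*}
    {G : SimpleGraph V} {g : V → (κ × R) ⊕ P} (hg : G.IsGridLayout g) {b b' : κ ↪ σ}
    (hb : (Set.range b ∩ Set.range b').Subsingleton) {i i' : ι} (hii' : i ≠ i') {u v : V}
    (huv : G.Adj u v) {z z' : (κ × R) ⊕ P}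
    (hu : layoutEmbedding b i (g u) = layoutEmbedding b' i' z)
    (hv : layoutEmbedding b i (g v) = layoutEmbedding b' i' z') : False := by
  obtain ⟨c, c', r, hgu, -, hc⟩ := layoutEmbedding_eq_layoutEmbedding hii' hu
  obtain ⟨d, d', r', hgv, -, hd⟩ := layoutEmbedding_eq_layoutEmbedding hii' hv
  exact hg huv hgu hgv (b.injective (hb ⟨⟨c, rfl⟩, c', hc.symm⟩ ⟨⟨d, rfl⟩, d', hd.symm⟩))

theorem stmt7_general {n : ℕ} (s t k p : ℕ) (hk : 0 < k)
    (htA : t ≤ designNumber s k)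
    (F : Fin t → SimpleGraph (Fin n))
    (hF : ∀ i, AlmostEquitablyColorable (F i) p k) :
    ∃ (N : ℕ) (U : SimpleGraph (Fin N)),
      N ≤ s * ((n - p + k - 1) / k) + t * p ∧ ∀ i, Nonempty (F i ↪g U) := by
  set q := (n - p + k - 1) / k
  have hn : Fintype.card (Fin n) ≤ q * k + p := by
    have : n - p + k - 1 < q * k + k := Nat.lt_div_mul_add hk
    rw [Fintype.card_fin]
    omega
  obtain ⟨b, hb⟩ := exists_embeddings_of_le_designNumber htA
  choose g hg using fun i => (hF i).exists_gridLayout hn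
  let f i := (g i).trans (layoutEmbedding (b i) i)
  have hf : ∀ i j, i ≠ j → ∀ u v x y, (F j).Adj u v → f j u = f i x → f j v = f i y →
      (F i).Adj x y := fun i j hij _ _ _ _ huv hu hv =>
    ((hg j).false_of_adj_of_layoutEmbedding_eq (hb j i hij.symm) hij.symm huv hu hv).elim
  let e := Fintype.equivFin ((Fin s × Fin q) ⊕ (Fin t × Fin p))
  refine ⟨_, (⨆ i, (F i).map (f i)).map e.toEmbedding, by simp, fun i =>
    ⟨(SimpleGraph.Iso.map e _).toEmbedding.comp (SimpleGraph.Embedding.toISupMap hf i)⟩⟩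

theorem stmt7 {n : ℕ} (s t k p : ℕ) (hs : 0 < s) (ht : 0 < t) (hk : 0 < k)
    (htA : t ≤ designNumber s k)
    (F : Fin t → SimpleGraph (Fin n))
    (hF : ∀ i, AlmostEquitablyColorable (F i) p k) :
    ∃ (N : ℕ) (U : SimpleGraph (Fin N)),
      N ≤ s * ((n - p + k - 1) / k) + t * p ∧ ∀ i, Nonempty (F i ↪g U) :=
  stmt7_general s t k p hk htA F hF
end

section
/- Every k-colorable graph of pathwidth at most p is p·(k−1)-almost equitably k-colorable. -/
/-- `G` has pathwidth at most `p`: it admits a path-decomposition (a sequence of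
bags covering all vertices and edges, whose occurrences of each vertex are
contiguous) all of whose bags have at most `p + 1` vertices. -/
def HasPathwidthLE {V : Type*} (G : SimpleGraph V) (p : ℕ) : Prop :=
  ∃ (r : ℕ) (B : Fin r → Finset V),
    (∀ v, ∃ i, v ∈ B i) ∧
    (∀ u v, G.Adj u v → ∃ i, u ∈ B i ∧ v ∈ B i) ∧
    (∀ v, ∀ i j l : Fin r, i ≤ j → j ≤ l → v ∈ B i → v ∈ B l → v ∈ B j) ∧
    (∀ i, (B i).card ≤ p + 1)

open Finset

variable {V α : Type*}

def IsProperOn (G : SimpleGraph V) (Y : Finset V) (c : V → α) : Prop :=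
  ∀ u ∈ Y, ∀ v ∈ Y, G.Adj u v → c u ≠ c v

theorem IsProperOn.mono {G : SimpleGraph V} {X Y : Finset V} {c : V → α}
    (h : IsProperOn G Y c) (hXY : X ⊆ Y) : IsProperOn G X c :=
  fun u hu v hv => h u (hXY hu) v (hXY hv)

theorem card_filter_univ_coe [Fintype V] (s : Finset V) (P : V → Prop) [DecidablePred P] :
    #{w : (s : Set V) | P w} = #{v ∈ s | P v} := by
  refine card_bij (fun w _ => w.1) (fun w hw => ?_) (fun _ _ _ _ h => Subtype.ext h) fun v hv => ?_
  · simpa using hw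
  · simp only [mem_filter] at hv
    exact ⟨⟨v, hv.1⟩, by simpa using hv.2, rfl⟩

section Balanced

variable [DecidableEq α] {G : SimpleGraph V}

variable (G) in
structure IsBalancedOn (C : Finset α) (t : ℕ) (Y : Finset V) (c : V → α) : Prop where
  isProperOn : IsProperOn G Y c
  mem : ∀ v ∈ Y, c v ∈ C
  le_card : ∀ i ∈ C, t ≤ #{v ∈ Y | c v = i}
  card_le : ∀ i ∈ C, #{v ∈ Y | c v = i} ≤ t + 1

theorem isBalancedOn_empty (C : Finset α) (c : V → α) : IsBalancedOn G C 0 ∅ c :=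
  ⟨fun _ h => by simp at h, fun _ h => by simp at h, fun _ _ => by simp, fun _ _ => by simp⟩

variable [DecidableEq V]

theorem IsBalancedOn.addClass {C : Finset α} {t : ℕ} {Y X : Finset V} {c c' : V → α} {x : α}
    (h : IsBalancedOn G (C.erase x) t ({v ∈ Y | c v ≠ x} \ X) c') (hc : IsProperOn G Y c)
    (hcC : ∀ v ∈ Y, c v ∈ C) (hXY : X ⊆ {v ∈ Y | c v ≠ x}) (hx : t ≤ #{v ∈ Y | c v = x})
    (hx' : #{v ∈ Y | c v = x} ≤ t + 1) :
    IsBalancedOn G C t (Y \ X) (fun v => if c v = x then x else c' v) := by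
  have hrest : ∀ v ∈ Y \ X, c v ≠ x → v ∈ {v ∈ Y | c v ≠ x} \ X := fun v hv hvx => by
    simp only [mem_sdiff, mem_filter] at hv ⊢
    exact ⟨⟨hv.1, hvx⟩, hv.2⟩
  have hne : ∀ v ∈ Y \ X, c v ≠ x → c' v ≠ x := fun v hv hvx =>
    (mem_erase.1 (h.mem v (hrest v hv hvx))).1
  have hclass_x : {v ∈ Y \ X | (if c v = x then x else c' v) = x} = {v ∈ Y | c v = x} := by
    ext v
    by_cases hvx : c v = x
    · have : v ∉ X := fun hvX => (mem_filter.1 (hXY hvX)).2 hvx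
      simp [hvx, this]
    · simp only [mem_filter, mem_sdiff, hvx, if_false, and_false, iff_false, not_and]
      exact fun hv => hne v (mem_sdiff.2 hv) hvx
  have hclass : ∀ i ≠ x, {v ∈ Y \ X | (if c v = x then x else c' v) = i} =
      {v ∈ {v ∈ Y | c v ≠ x} \ X | c' v = i} := fun i hix => by
    ext v
    by_cases hvx : c v = x <;> simp [hvx, Ne.symm hix, and_assoc]
  refine ⟨fun u hu v hv huv => ?_, fun v hv => ?_, fun i hi => ?_, fun i hi => ?_⟩
  · have hcuv := hc u (sdiff_subset hu) v (sdiff_subset hv) huv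
    by_cases hux : c u = x <;> by_cases hvx : c v = x <;> simp only [hux, hvx, if_true, if_false]
    · exact absurd (hux.trans hvx.symm) hcuv
    · exact (hne v hv hvx).symm
    · exact hne u hu hux
    · exact h.isProperOn u (hrest u hu hux) v (hrest v hv hvx) huv
  · by_cases hvx : c v = x
    · simpa [hvx] using hcC v (sdiff_subset hv)
    · simpa [hvx] using mem_of_mem_erase (h.mem v (hrest v hv hvx))
  · obtain rfl | hix := eq_or_ne i x
    · rwa [hclass_x]
    · rw [hclass i hix]
      exact h.le_card i (mem_erase.2 ⟨hix, hi⟩)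
  · obtain rfl | hix := eq_or_ne i x
    · rwa [hclass_x]
    · rw [hclass i hix]
      exact h.card_le i (mem_erase.2 ⟨hix, hi⟩)

theorem exists_isBalancedOn_sdiff_of_lt_card {C : Finset α} {t : ℕ} {Y : Finset V} {c : V → α}
    (hc : IsProperOn G Y c) (hcC : ∀ v ∈ Y, c v ∈ C) (hlt : ∀ i ∈ C, t < #{v ∈ Y | c v = i}) :
    ∃ X ⊆ Y, #X + #C * (t + 1) = #Y ∧ IsBalancedOn G C t (Y \ X) c := by
  choose K hKY hK using fun i => exists_subset_card_eq (min_le_right (t + 1) #{v ∈ Y | c v = i})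
  have hmemK : ∀ {i v}, v ∈ K i → v ∈ Y ∧ c v = i := fun hv => mem_filter.1 (hKY _ hv)
  have hcardK : ∀ i ∈ C, #(K i) = t + 1 := fun i hi => (hK i).trans (min_eq_left (hlt i hi))
  have hZY : C.biUnion K ⊆ Y := biUnion_subset.2 fun i _ v hv => (hmemK hv).1
  have hdisj : (C : Set α).PairwiseDisjoint K := fun i _ j _ hij =>
    disjoint_left.2 fun v hvi hvj => hij ((hmemK hvi).2.symm.trans (hmemK hvj).2)
  have hZ : #(C.biUnion K) = #C * (t + 1) := by
    rw [card_biUnion hdisj, sum_congr rfl hcardK, sum_const, smul_eq_mul]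
  have hclass : ∀ i ∈ C, {v ∈ C.biUnion K | c v = i} = K i := by
    intro i hi
    ext v
    simp only [mem_filter, mem_biUnion]
    constructor
    · rintro ⟨⟨j, -, hv⟩, rfl⟩
      rwa [(hmemK hv).2]
    · exact fun hv => ⟨⟨i, hi, hv⟩, (hmemK hv).2⟩
  refine ⟨Y \ C.biUnion K, sdiff_subset, ?_, ?_⟩
  · rw [card_sdiff_of_subset hZY, hZ]
    have := card_le_card hZY
    omega
  · rw [Finset.sdiff_sdiff_eq_self hZY]
    refine ⟨hc.mono hZY, fun v hv => hcC v (hZY hv), fun i hi => ?_, fun i hi => ?_⟩ <;>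
      simp [hclass i hi, hcardK i hi]

theorem IsBalancedOn.equitablyColorable_induce [Fintype V] {k t : ℕ} {X : Finset V}
    {c : V → Fin k} (h : IsBalancedOn G univ t Xᶜ c) :
    EquitablyColorable (G.induce (↑Xᶜ : Set V)) k := by
  refine ⟨fun w => c w, fun u v huv => h.isProperOn u (by simp) v (by simp) huv, fun i j => ?_⟩
  rw [card_filter_univ_coe Xᶜ (c · = i), card_filter_univ_coe Xᶜ (c · = j)]
  have := h.card_le i (mem_univ _)
  have := h.le_card j (mem_univ _)
  omega

end Balanced

/-- A path-decomposition of width `p` refined so that a single vertex enters or leaves at each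
time step: vertex `v` is active at the times `τ` with `enter v < τ ≤ leave v`. -/
structure IntervalModel [Fintype V] (G : SimpleGraph V) (p : ℕ) where
  enter : V → ℕ
  leave : V → ℕ
  enter_lt_leave : ∀ v, enter v < leave v
  enter_lt_leave_of_adj : ∀ ⦃u v⦄, G.Adj u v → enter u < leave v
  width : ∀ τ, #{v | enter v < τ ∧ τ ≤ leave v} ≤ p + 1
  endpoints_injective : Function.Injective (Sum.elim enter leave)

theorem exists_bag_interval {r : ℕ} (B : Fin r → Finset V) (hcover : ∀ v, ∃ i, v ∈ B i)
    (hconv : ∀ v, ∀ i j l : Fin r, i ≤ j → j ≤ l → v ∈ B i → v ∈ B l → v ∈ B j) :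
    ∃ f g : V → Fin r, ∀ v i, v ∈ B i ↔ f v ≤ i ∧ i ≤ g v := by
  classical
  have hne : ∀ v, ({i | v ∈ B i} : Finset (Fin r)).Nonempty := fun v =>
    (hcover v).imp fun i hi => by simpa using hi
  refine ⟨fun v => min' _ (hne v), fun v => max' _ (hne v), fun v i => ⟨fun hi => ?_, fun hi => ?_⟩⟩
  · exact ⟨min'_le _ _ (by simpa using hi), le_max' _ _ (by simpa using hi)⟩
  · simpa using hconv v _ i _ hi.1 hi.2 (by simpa using min'_mem _ (hne v))
      (by simpa using max'_mem _ (hne v))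

theorem card_active_le_of_bags [Fintype V] {r p : ℕ} {f g : V → Fin r} {enter leave : V → ℕ}
    (hwidth : ∀ i, #{v | f v ≤ i ∧ i ≤ g v} ≤ p + 1)
    (h : ∀ u v, enter u < leave v → f u ≤ g v) (τ : ℕ) :
    #{v | enter v < τ ∧ τ ≤ leave v} ≤ p + 1 := by
  rcases ({v | enter v < τ ∧ τ ≤ leave v} : Finset V).eq_empty_or_nonempty with hA | hA
  · simp [hA]
  obtain ⟨w, hw, hmax⟩ := exists_max_image _ f hA
  refine (card_le_card fun v hv => ?_).trans (hwidth (f w))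
  simp only [mem_filter, mem_univ, true_and] at hv hw ⊢
  exact ⟨hmax v (by simpa using hv), h w v (by omega)⟩

theorem Nat.add_mul_lt_add_mul {n q₁ q₂ e₁ e₂ : ℕ} (hq : q₁ < q₂) (he₁ : e₁ < n) :
    e₁ + q₁ * n < e₂ + q₂ * n := by
  nlinarith

theorem Nat.eq_and_eq_of_add_mul_eq_add_mul {n q₁ q₂ e₁ e₂ : ℕ} (he₁ : e₁ < n) (he₂ : e₂ < n)
    (h : e₁ + q₁ * n = e₂ + q₂ * n) : q₁ = q₂ ∧ e₁ = e₂ := by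
  obtain hq | rfl | hq := lt_trichotomy q₁ q₂
  · exact absurd h (add_mul_lt_add_mul hq he₁).ne
  · exact ⟨rfl, by omega⟩
  · exact absurd h (add_mul_lt_add_mul hq he₂).ne'

namespace IntervalModel

variable [Fintype V] {G : SimpleGraph V} {p : ℕ}

/-- Bag `i` consists of the `v` with `f v ≤ i ≤ g v`. Bag index `i` becomes two blocks of `|V|`
time steps, in the first of which the vertices with `f v = i` enter and in the second of which
those with `g v = i` leave, one at a time in the order of `Fintype.equivFin V`. -/
noncomputable def ofBagIntervals {r : ℕ} (f g : V → Fin r) (hfg : ∀ v, f v ≤ g v)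
    (hadj : ∀ ⦃u v⦄, G.Adj u v → f u ≤ g v)
    (hwidth : ∀ i, #{v | f v ≤ i ∧ i ≤ g v} ≤ p + 1) : IntervalModel G p where
  enter v := (Fintype.equivFin V v : ℕ) + 2 * (f v : ℕ) * Fintype.card V
  leave v := (Fintype.equivFin V v : ℕ) + (2 * (g v : ℕ) + 1) * Fintype.card V
  enter_lt_leave v := Nat.add_mul_lt_add_mul (by have := Fin.le_def.1 (hfg v); omega)
    (Fintype.equivFin V v).2
  enter_lt_leave_of_adj u v huv :=
    Nat.add_mul_lt_add_mul (by have := Fin.le_def.1 (hadj huv); omega) (Fintype.equivFin V u).2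
  width := card_active_le_of_bags hwidth fun u v huv => not_lt.1 fun hlt =>
    (Nat.add_mul_lt_add_mul (e₂ := Fintype.equivFin V u)
      (show 2 * (g v : ℕ) + 1 < 2 * f u by omega) (Fintype.equivFin V v).2).not_gt huv
  endpoints_injective := by
    have hlt := fun v => (Fintype.equivFin V v).2
    refine Function.Injective.sumElim (fun u v h => ?_) (fun u v h => ?_) fun u v h => ?_ <;>
      obtain ⟨hq, he⟩ := Nat.eq_and_eq_of_add_mul_eq_add_mul (hlt _) (hlt _) h
    · exact (Fintype.equivFin V).injective (Fin.ext he)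
    · exact (Fintype.equivFin V).injective (Fin.ext he)
    · omega

end IntervalModel

theorem HasPathwidthLE.nonempty_intervalModel [Fintype V] {G : SimpleGraph V} {p : ℕ}
    (h : HasPathwidthLE G p) : Nonempty (IntervalModel G p) := by
  obtain ⟨r, B, hcover, hedge, hconv, hcard⟩ := h
  obtain ⟨f, g, hB⟩ := exists_bag_interval B hcover hconv
  refine ⟨.ofBagIntervals f g (fun v => ?_) (fun u v huv => ?_) fun i => ?_⟩
  · obtain ⟨i, hi⟩ := hcover v
    exact ((hB v i).1 hi).1.trans ((hB v i).1 hi).2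
  · obtain ⟨i, hu, hv⟩ := hedge u v huv
    exact ((hB u i).1 hu).1.trans ((hB v i).1 hv).2
  · convert hcard i using 2
    ext v
    simp [hB]

namespace IntervalModel

variable [Fintype V] [DecidableEq α] {G : SimpleGraph V} {p : ℕ} (M : IntervalModel G p)

def active (Y : Finset V) (τ : ℕ) : Finset V :=
  {v ∈ Y | M.enter v < τ ∧ τ ≤ M.leave v}

/-- The size of colour class `a` once the vertices active at time `τ` are deleted and the colours
`a` and `b` are swapped on the vertices that enter at time `τ` or later. -/
def swapCount (Y : Finset V) (c : V → α) (a b : α) (τ : ℕ) : ℕ :=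
  #{v ∈ Y | M.leave v < τ ∧ c v = a} + #{v ∈ Y | τ ≤ M.enter v ∧ c v = b}

variable {M} {Y : Finset V} {c : V → α} {a b : α}

theorem card_active_le (Y : Finset V) (τ : ℕ) : #(M.active Y τ) ≤ p + 1 :=
  (card_le_card (filter_subset_filter _ (subset_univ Y))).trans (M.width τ)

theorem card_enter_add_card_leave_le_one (Y : Finset V) (τ : ℕ) :
    #{v ∈ Y | M.enter v = τ} + #{v ∈ Y | M.leave v = τ} ≤ 1 := by
  rw [← card_disjSum]
  refine card_le_one.2 fun x hx y hy => M.endpoints_injective ?_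
  rcases x with x | x <;> rcases y with y | y <;> simp_all

theorem card_active_succ_add (Y : Finset V) (τ : ℕ) :
    #(M.active Y (τ + 1)) + #{v ∈ Y | M.leave v = τ} =
      #(M.active Y τ) + #{v ∈ Y | M.enter v = τ} := by
  simp only [active, card_filter, ← sum_add_distrib]
  refine sum_congr rfl fun v _ => ?_
  have := M.enter_lt_leave v
  split_ifs <;> omega

theorem swapCount_succ_add (τ : ℕ) :
    M.swapCount Y c a b (τ + 1) + #{v ∈ Y | M.enter v = τ ∧ c v = b} =
      M.swapCount Y c a b τ + #{v ∈ Y | M.leave v = τ ∧ c v = a} := by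
  simp only [swapCount, card_filter, ← sum_add_distrib]
  refine sum_congr rfl fun v _ => ?_
  generalize c v = x
  rcases eq_or_ne x a with rfl | hxa <;> rcases eq_or_ne x b with rfl | hxb <;>
    simp only [*, and_true, and_false, if_false] <;> split_ifs <;> omega

theorem swapCount_succ_le_add_card_leave (τ : ℕ) :
    M.swapCount Y c a b (τ + 1) ≤ M.swapCount Y c a b τ + #{v ∈ Y | M.leave v = τ} := by
  have h := swapCount_succ_add (M := M) (Y := Y) (c := c) (a := a) (b := b) τ
  have : #{v ∈ Y | M.leave v = τ ∧ c v = a} ≤ #{v ∈ Y | M.leave v = τ} := by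
    rw [← filter_filter]
    exact card_filter_le _ _
  omega

theorem swapCount_succ_le (τ : ℕ) : M.swapCount Y c a b (τ + 1) ≤ M.swapCount Y c a b τ + 1 := by
  have := swapCount_succ_le_add_card_leave (M := M) (Y := Y) (c := c) (a := a) (b := b) τ
  have := card_enter_add_card_leave_le_one (M := M) Y τ
  omega

theorem swapCount_succ_le_of_card_active_le {τ : ℕ}
    (h : #(M.active Y τ) ≤ #(M.active Y (τ + 1))) :
    M.swapCount Y c a b (τ + 1) ≤ M.swapCount Y c a b τ := by
  have := swapCount_succ_le_add_card_leave (M := M) (Y := Y) (c := c) (a := a) (b := b) τ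
  have := card_enter_add_card_leave_le_one (M := M) Y τ
  have := card_active_succ_add (M := M) Y τ
  omega

variable (M) in
/-- `swapCount` rises by at most one per step, and only when a vertex leaves, which cannot happen
on a step into a time with `p + 1` active vertices; so it cannot jump over `s` at the times with at
most `p` active vertices. -/
theorem exists_card_active_le_swapCount_eq {s : ℕ} (hbs : #{v ∈ Y | c v = b} ≤ s)
    (hsa : s ≤ #{v ∈ Y | c v = a}) : ∃ τ, #(M.active Y τ) ≤ p ∧ M.swapCount Y c a b τ = s := by
  by_contra! h
  have hlt : ∀ τ, M.swapCount Y c a b τ < s := by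
    intro τ
    induction τ with
    | zero =>
      have h0 : M.swapCount Y c a b 0 = #{v ∈ Y | c v = b} := by simp [swapCount]
      exact (h0 ▸ hbs).lt_of_ne (h 0 (by simp [active]))
    | succ τ ih =>
      by_cases hgood : #(M.active Y (τ + 1)) ≤ p
      · exact ((swapCount_succ_le τ).trans (by omega)).lt_of_ne (h _ hgood)
      · have := card_active_le (M := M) Y τ
        exact (swapCount_succ_le_of_card_active_le (by omega)).trans_lt ih
  set T := Y.sup M.leave + 1
  have hleave : ∀ v ∈ Y, M.leave v < T := fun v hv => Nat.lt_succ_of_le (le_sup hv)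
  have hend : M.swapCount Y c a b T = #{v ∈ Y | c v = a} := by
    have h₁ : {v ∈ Y | M.leave v < T ∧ c v = a} = {v ∈ Y | c v = a} :=
      filter_congr fun v hv => by simp [hleave v hv]
    have h₂ : {v ∈ Y | T ≤ M.enter v ∧ c v = b} = ∅ :=
      filter_eq_empty_iff.2 fun v hv => by have := hleave v hv; have := M.enter_lt_leave v; omega
    rw [swapCount, h₁, h₂, card_empty, add_zero]
  exact (hend ▸ hsa).not_gt (hlt T)

end IntervalModel

/-- Cut at a time `τ` with at most `p` active vertices and delete those: every other vertex has
either left or not yet entered, and no edge joins a vertex that has left to one that has not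
entered, so `a` and `b` may be swapped on the latter. -/
theorem HasPathwidthLE.exists_cut_swap [Fintype V] [DecidableEq V] [DecidableEq α]
    {G : SimpleGraph V} {p : ℕ} (hG : HasPathwidthLE G p) {Y : Finset V} {c : V → α} {a b : α}
    (hc : IsProperOn G Y c) {s : ℕ} (hbs : #{v ∈ Y | c v = b} ≤ s)
    (hsa : s ≤ #{v ∈ Y | c v = a}) :
    ∃ D ⊆ Y, #D ≤ p ∧ ∃ c' : V → α, IsProperOn G (Y \ D) c' ∧ #{v ∈ Y \ D | c' v = a} = s ∧
      ∀ v, c' v = c v ∨ c' v = Equiv.swap a b (c v) := by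
  obtain ⟨M⟩ := hG.nonempty_intervalModel
  obtain ⟨τ, hτ, hs⟩ := M.exists_card_active_le_swapCount_eq hbs hsa
  have hside : ∀ v ∈ Y \ M.active Y τ, M.leave v < τ ∨ τ ≤ M.enter v := fun v hv => by
    simp only [IntervalModel.active, mem_sdiff, mem_filter, not_and] at hv
    have := hv.2 hv.1
    have := M.enter_lt_leave v
    omega
  refine ⟨M.active Y τ, filter_subset _ _, hτ,
    fun v => if τ ≤ M.enter v then Equiv.swap a b (c v) else c v, fun u hu v hv huv => ?_, ?_,
    fun v => by dsimp only; split_ifs <;> simp⟩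
  · have := hside u hu
    have := hside v hv
    have := M.enter_lt_leave_of_adj huv
    have := M.enter_lt_leave_of_adj huv.symm
    have hcuv := hc u (sdiff_subset hu) v (sdiff_subset hv) huv
    dsimp only
    split_ifs <;> first | omega | exact hcuv | exact (Equiv.swap a b).injective.ne hcuv
  · rw [← hs, IntervalModel.swapCount, IntervalModel.active, ← filter_not, filter_filter,
      card_filter, card_filter, card_filter, ← sum_add_distrib]
    refine sum_congr rfl fun v _ => ?_
    have := M.enter_lt_leave v
    beta_reduce
    by_cases hτv : τ ≤ M.enter v
    · have hva : Equiv.swap a b (c v) = a ↔ c v = b := by simp [Equiv.swap_apply_eq_iff]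
      simp only [hτv, if_true, hva, not_and, not_le]
      split_ifs <;> simp_all <;> omega
    · simp only [hτv, if_false, not_and, not_le]
      split_ifs <;> simp_all

theorem exists_next_class_size {m t p β n A : ℕ} (hlow : (m + 1) * t + p * (m + 1) ≤ n + p)
    (hup : n ≤ (m + 1) * (t + 1) + β) (hβ : p * (m + 1) ≤ β + p) (hA : n ≤ (m + 1) * A) :
    ∃ s, t ≤ s ∧ s ≤ t + 1 ∧ s ≤ A ∧ m * t + p * m + s ≤ n ∧ n ≤ m * (t + 1) + β + s := by
  simp only [add_mul, mul_add, one_mul, mul_one] at hlow hup hβ ⊢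
  have htn : (m + 1) * t ≤ n := by rw [add_mul, one_mul]; omega
  by_cases hfull : n = m * t + m + t + 1 + β
  · refine ⟨t + 1, by omega, le_rfl, ?_, by omega, by omega⟩
    exact Nat.le_of_mul_le_mul_left (c := m + 1) (by linarith) m.succ_pos
  · exact ⟨t, le_rfl, by omega, Nat.le_of_mul_le_mul_left (htn.trans hA) m.succ_pos, by omega,
      by omega⟩

theorem exists_equitable_class_size {n p k : ℕ} (hk : 0 < k) (hn : p * (k - 1) ≤ n) :
    ∃ t, k * t + p * k ≤ n + p ∧ n ≤ k * (t + 1) + p * (k - 1) := by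
  obtain ⟨k, rfl⟩ := Nat.exists_eq_add_one_of_ne_zero hk.ne'
  rw [Nat.add_sub_cancel] at hn ⊢
  have h₁ := Nat.mul_div_le (n - p * k) (k + 1)
  have h₂ := Nat.lt_mul_div_succ (n - p * k) hk
  exact ⟨(n - p * k) / (k + 1), by rw [mul_add, mul_one]; omega, by omega⟩

section Recursion

variable [Fintype V] [DecidableEq V] [DecidableEq α] {G : SimpleGraph V} {p : ℕ}

/-- The bound `#D ≤ p * (#C - 1)` records that nothing is deleted when a single colour is left. -/
theorem HasPathwidthLE.exists_class_card_eq (hG : HasPathwidthLE G p) {C : Finset α}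
    {Y : Finset V} {c : V → α} {a b : α} (hc : IsProperOn G Y c) (hcC : ∀ v ∈ Y, c v ∈ C)
    (ha : a ∈ C) (hb : b ∈ C) {s : ℕ} (hbs : #{v ∈ Y | c v = b} ≤ s)
    (hsa : s ≤ #{v ∈ Y | c v = a}) :
    ∃ x ∈ C, ∃ D ⊆ Y, #D ≤ p ∧ #D ≤ p * (#C - 1) ∧ ∃ c' : V → α, IsProperOn G (Y \ D) c' ∧
      (∀ v ∈ Y \ D, c' v ∈ C) ∧ #{v ∈ Y \ D | c' v = x} = s := by
  rcases eq_or_ne a b with rfl | hab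
  · exact ⟨a, ha, ∅, empty_subset _, by simp, by simp, c, by simpa using hc, by simpa using hcC,
      by simpa using (le_antisymm hsa hbs).symm⟩
  obtain ⟨D, hDY, hDp, c', hc', hs, hswap⟩ := hG.exists_cut_swap hc hbs hsa
  have hC : 2 ≤ #C := one_lt_card.2 ⟨a, ha, b, hb, hab⟩
  refine ⟨a, ha, D, hDY, hDp, hDp.trans (Nat.le_mul_of_pos_right p (by omega)), c', hc',
    fun v hv => ?_, hs⟩
  have hvC := hcC v (mem_sdiff.1 hv).1
  rcases hswap v with h | h <;> rw [h]
  · exact hvC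
  · rw [Equiv.swap_apply_def]
    split_ifs <;> assumption

/-- Written without truncated subtraction, `hlow` and `hβ` say `m * t + p * (m - 1) ≤ #Y` and
`p * (m - 1) ≤ β`. Each step fixes one colour class of size `t` or `t + 1` at the cost of at most
`p` deleted vertices, unless all classes already exceed `t` and can simply be trimmed. -/
theorem HasPathwidthLE.exists_isBalancedOn (hG : HasPathwidthLE G p) (t : ℕ) {m : ℕ}
    {C : Finset α} (hC : #C = m) {Y : Finset V} {c : V → α} {β : ℕ} (hc : IsProperOn G Y c)
    (hcC : ∀ v ∈ Y, c v ∈ C) (hlow : m * t + p * m ≤ #Y + p) (hup : #Y ≤ m * (t + 1) + β)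
    (hβ : p * m ≤ β + p) :
    ∃ X ⊆ Y, #X ≤ β ∧ ∃ c', IsBalancedOn G C t (Y \ X) c' := by
  induction m generalizing C Y c β with
  | zero =>
    rw [card_eq_zero.1 hC]
    exact ⟨Y, subset_rfl, by simpa using hup, c, by simp [IsProperOn], by simp, by simp, by simp⟩
  | succ m ih =>
    have hCne : C.Nonempty := card_pos.1 (by omega)
    obtain ⟨a, ha, hamax⟩ := exists_max_image C (fun i => #{v ∈ Y | c v = i}) hCne
    obtain ⟨b, hb, hbmin⟩ := exists_min_image C (fun i => #{v ∈ Y | c v = i}) hCne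
    have hYa : #Y ≤ (m + 1) * #{v ∈ Y | c v = a} := by
      rw [card_eq_sum_card_fiberwise hcC, ← hC, ← smul_eq_mul, ← sum_const]
      exact sum_le_sum hamax
    rcases lt_or_ge t #{v ∈ Y | c v = b} with hbt | hbt
    · obtain ⟨X, hXY, hX, hbal⟩ := exists_isBalancedOn_sdiff_of_lt_card hc hcC fun i hi =>
        hbt.trans_le (hbmin i hi)
      exact ⟨X, hXY, by rw [hC] at hX; omega, c, hbal⟩
    obtain ⟨s, hts, hst, hsa, hslow, hsup⟩ := exists_next_class_size hlow hup hβ hYa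
    obtain ⟨x, hx, D, hDY, hDp, hDm, c₁, hc₁, hc₁C, hxs⟩ :=
      hG.exists_class_card_eq hc hcC ha hb (hbt.trans hts) hsa
    rw [hC, Nat.add_sub_cancel] at hDm
    set Y' := {v ∈ Y \ D | c₁ v ≠ x}
    have hY' : #Y' + s + #D = #Y := by
      rw [← hxs, add_comm #Y', card_filter_add_card_filter_not, card_sdiff_of_subset hDY,
        Nat.sub_add_cancel (card_le_card hDY)]
    have hpm : p * m ≤ β := by rw [mul_add, mul_one] at hβ; omega
    obtain ⟨X, hXY, hX, c', hbal⟩ := ih (C := C.erase x) (Y := Y') (β := β - #D)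
      (by rw [card_erase_of_mem hx, hC]; rfl) (hc₁.mono (filter_subset _ _))
      (fun v hv => mem_erase.2 ⟨(mem_filter.1 hv).2, hc₁C v (mem_filter.1 hv).1⟩)
      (by omega) (by omega) (by omega)
    refine ⟨D ∪ X, union_subset hDY (hXY.trans ((filter_subset _ _).trans sdiff_subset)),
      (card_union_le _ _).trans (by omega), fun v => if c₁ v = x then x else c' v, ?_⟩
    rw [← sup_eq_union, ← sdiff_sdiff_left]
    exact hbal.addClass hc₁ hc₁C hXY (hxs ▸ hts) (hxs ▸ hst)

end Recursion

theorem stmt8 {V : Type} [Fintype V] [DecidableEq V] (G : SimpleGraph V) (p k : ℕ)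
    (hcol : G.Colorable k) (hpw : HasPathwidthLE G p) :
    AlmostEquitablyColorable G (p * (k - 1)) k := by
  obtain ⟨C⟩ := hcol
  obtain ⟨X, hX, t, c, hbal⟩ :
      ∃ X : Finset V, #X ≤ p * (k - 1) ∧ ∃ t c, IsBalancedOn G univ t Xᶜ c := by
    rcases lt_or_ge (Fintype.card V) (p * (k - 1)) with hn | hn
    · exact ⟨univ, hn.le, 0, C, by simpa using isBalancedOn_empty (G := G) univ C⟩
    obtain ⟨t, hlow, hup⟩ : ∃ t, k * t + p * k ≤ Fintype.card V + p ∧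
        Fintype.card V ≤ k * (t + 1) + p * (k - 1) := by
      rcases k.eq_zero_or_pos with rfl | hk
      · exact ⟨0, by simp, by simp [Fintype.card_eq_zero_iff.2 ⟨fun v => (C v).elim0⟩]⟩
      · exact exists_equitable_class_size hk hn
    obtain ⟨X, -, hX, c, hbal⟩ := hpw.exists_isBalancedOn t (card_fin k) (Y := univ)
      (fun u _ v _ huv => C.valid huv) (fun _ _ => mem_univ _) (by rwa [card_univ])
      (by rwa [card_univ]) (by cases k <;> simp [mul_add])
    exact ⟨X, hX, t, c, by rwa [compl_eq_univ_sdiff]⟩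
  exact ⟨X, hX, hbal.equitablyColorable_induce⟩
end

section
/- Let k ≥ 2 be an integer and c > 0 a real constant. For each n, let F_n be a family of k-colorable graphs, each with exactly n vertices and pathwidth at most p_n, where p_n·k = o(n) as n → ∞. If 𝒰(F_n) ≥ c·n − o(n), then for every sufficiently large n, the family F_n contains more than A(⌈ck⌉−1, 2k−2, k) graphs. -/
open Filter Asymptotics

open Finset

/-!
Suppose `|F_n| ≤ A(s, 2k-2, k)` where `s = ⌈ck⌉ - 1 < ck`, and give each graph `G ∈ F_n` its
own `k`-subset `C_G` of `[s]`, any two sharing at most one point. Order the vertices of `G` by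
their first bag in a path-decomposition, cut this order into blocks of `L ≈ √(n p)` vertices
and discard the bag where each block starts, `O(n p / L)` vertices in all: every remaining edge
lies inside a block, so permuting the colours block by block balances a `k`-colouring to
classes of size at most `n / k + L`. Put colour class `j` of `G` into column `C_G(j)` of an
`s × (n / k + L)` grid and the discarded vertices into a private row. An edge joins two
different columns and two graphs share at most one column, so the union of the placed graphs
contains each `G` as an induced subgraph; it has `(s / k) n + o(n) < c n - o(n)` vertices.
-/

theorem Tuple.exists_perm_antivary {k : ℕ} {α β : Type*} [LinearOrder α] [LinearOrder β]
    (f : Fin k → α) (g : Fin k → β) : ∃ ρ : Equiv.Perm (Fin k), Antivary (g ∘ ρ) f := by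
  refine ⟨(Tuple.sort f).symm.trans (Fin.revPerm.trans (Tuple.sort g)), fun x y hxy => ?_⟩
  have hsorted : (Tuple.sort f).symm x < (Tuple.sort f).symm y := by
    by_contra! h
    have hyx : f y ≤ f x := by simpa using Tuple.monotone_sort f h
    exact hyx.not_gt hxy
  exact Tuple.monotone_sort g (Fin.rev_le_rev.mpr hsorted.le)

theorem exists_perms_sum_balanced {ι : Type*} [DecidableEq ι] {k M : ℕ}
    (a : ι → Fin k → ℕ) (ha : ∀ ℓ j, a ℓ j ≤ M) (S : Finset ι) :
    ∃ π : ι → Equiv.Perm (Fin k),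
      ∀ x y, ∑ ℓ ∈ S, a ℓ (π ℓ x) ≤ ∑ ℓ ∈ S, a ℓ (π ℓ y) + M := by
  induction S using Finset.induction_on with
  | empty => exact ⟨fun _ => 1, fun _ _ => by simp⟩
  | insert ℓ₀ S hℓ₀ ih =>
    obtain ⟨π, hπ⟩ := ih
    set T : Fin k → ℕ := fun x => ∑ ℓ ∈ S, a ℓ (π ℓ x)
    obtain ⟨ρ, hρ⟩ := Tuple.exists_perm_antivary T (a ℓ₀)
    have hS : ∀ σ : Equiv.Perm (Fin k), ∀ x,
        ∑ ℓ ∈ S, a ℓ (Function.update π ℓ₀ σ ℓ x) = T x := fun σ x =>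
      Finset.sum_congr rfl fun ℓ hℓ => by
        rw [Function.update_of_ne (ne_of_mem_of_not_mem hℓ hℓ₀)]
    refine ⟨Function.update π ℓ₀ ρ, fun x y => ?_⟩
    simp only [Finset.sum_insert hℓ₀, Function.update_self, hS]
    rcases le_or_gt (T x) (T y) with hle | hlt
    · linarith [ha ℓ₀ (ρ x)]
    · have hT : T x ≤ T y + M := hπ x y
      have ha₀ : a ℓ₀ (ρ x) ≤ a ℓ₀ (ρ y) := hρ hlt
      omega

theorem exists_balanced_recoloring {V ι : Type*} [Fintype V] [DecidableEq ι] {k L : ℕ}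
    (φ : V → Fin k) (β : V → ι) (hβ : ∀ ℓ, #{v | β v = ℓ} ≤ L) :
    ∃ π : ι → Equiv.Perm (Fin k),
      ∀ j, k * #{v | (π (β v)).symm (φ v) = j} ≤ Fintype.card V + k * L := by
  classical
  set a : ι → Fin k → ℕ := fun ℓ c => #{v | β v = ℓ ∧ φ v = c}
  have ha : ∀ ℓ c, a ℓ c ≤ L := fun ℓ c =>
    (card_le_card fun v => by simp +contextual).trans (hβ ℓ)
  obtain ⟨π, hπ⟩ := exists_perms_sum_balanced a ha (univ.image β)
  refine ⟨π, fun j => ?_⟩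
  set T : Fin k → ℕ := fun j => #{v | (π (β v)).symm (φ v) = j}
  have hT : ∀ j, T j = ∑ ℓ ∈ univ.image β, a ℓ (π ℓ j) := fun j => by
    simp only [T]
    rw [card_eq_sum_card_fiberwise (f := β) fun v _ => mem_image_of_mem β (mem_univ v)]
    refine sum_congr rfl fun ℓ _ => congrArg card (ext fun v => ?_)
    simp only [mem_filter, mem_univ, true_and, Equiv.symm_apply_eq]
    constructor
    · rintro ⟨h, rfl⟩; exact ⟨rfl, h⟩
    · rintro ⟨rfl, h⟩; exact ⟨h, rfl⟩
  have hsum : ∑ y, T y = Fintype.card V :=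
    (card_eq_sum_card_fiberwise (s := univ) (t := univ) fun _ _ => mem_univ _).symm
  calc k * T j = ∑ _y : Fin k, T j := by simp
    _ ≤ ∑ y, (T y + L) := sum_le_sum fun y _ => by rw [hT, hT]; exact hπ j y
    _ = Fintype.card V + k * L := by rw [sum_add_distrib, hsum]; simp

theorem card_filter_fin_dvd_le (n L : ℕ) :
    #{q : Fin n | L ∣ (q : ℕ)} ≤ n / L + 1 := by
  calc #{q : Fin n | L ∣ (q : ℕ)} ≤ #(range (n / L + 1)) := by
        refine card_le_card_of_injOn (fun q => (q : ℕ) / L) (fun q _ => ?_)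
          fun q hq q' hq' h => Fin.ext ?_
        · simpa [Nat.lt_succ_iff] using Nat.div_le_div_right q.2.le
        · simp only [coe_filter, mem_univ, true_and, Set.mem_ofPred_eq] at hq hq'
          rw [← Nat.div_mul_cancel hq, ← Nat.div_mul_cancel hq']
          exact congrArg (· * L) h
    _ = n / L + 1 := card_range _

theorem HasPathwidthLE.exists_blocks {n p L : ℕ} {G : SimpleGraph (Fin n)}
    (hG : HasPathwidthLE G p) (hL : 0 < L) :
    ∃ (β : Fin n → ℕ) (J : Finset (Fin n)), (∀ ℓ, #{v | β v = ℓ} ≤ L) ∧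
      #J ≤ (n / L + 1) * (p + 1) ∧
      ∀ u v, G.Adj u v → u ∉ J → v ∉ J → β u = β v := by
  classical
  obtain ⟨r, B, hcov, hedge, hintv, hsize⟩ := hG
  have hfirst : ∀ v, ∃ i, v ∈ B i ∧ ∀ j, v ∈ B j → i ≤ j := fun v => by
    obtain ⟨i, hi, hmin⟩ := wellFounded_lt.has_min {i | v ∈ B i} (hcov v)
    exact ⟨i, hi, fun j hj => not_lt.1 (hmin j hj)⟩
  choose first hfirst_mem hfirst_le using hfirst
  set σ := Tuple.sort first
  have hmono : Monotone (first ∘ σ) := Tuple.monotone_sort first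
  set J := (univ.filter fun q : Fin n => L ∣ (q : ℕ)).biUnion fun q => B (first (σ q))
  have hcut : ∀ u v i, σ.symm u ≤ σ.symm v → u ∈ B i → v ∈ B i → u ∉ J →
      (σ.symm u : ℕ) / L = (σ.symm v : ℕ) / L := by
    intro u v i huv hu hv huJ
    refine le_antisymm (Nat.div_le_div_right huv) (not_lt.1 fun hlt => huJ ?_)
    set q : Fin n :=
      ⟨(σ.symm v : ℕ) / L * L, (Nat.div_mul_le_self _ _).trans_lt (σ.symm v).2⟩
    have huq : σ.symm u ≤ q := (Nat.div_lt_iff_lt_mul hL |>.1 hlt).le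
    have hqv : q ≤ σ.symm v := Nat.div_mul_le_self _ _
    simp only [J, mem_biUnion, mem_filter, mem_univ, true_and]
    refine ⟨q, dvd_mul_left _ _, hintv u (first u) _ i ?_ ?_ (hfirst_mem u) hu⟩
    · simpa using hmono huq
    · exact (hmono hqv).trans (by simpa using hfirst_le v i hv)
  refine ⟨fun v => (σ.symm v : ℕ) / L, J, fun ℓ => ?_, ?_, fun u v huv hu hv => ?_⟩
  · calc #{v | (σ.symm v : ℕ) / L = ℓ} ≤ #(Ico (ℓ * L) (ℓ * L + L)) := by
          refine card_le_card_of_injOn (fun v => (σ.symm v : ℕ)) (fun v hv => ?_)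
            fun v _ w _ h => σ.symm.injective (Fin.ext h)
          simp only [coe_filter, mem_univ, true_and, Set.mem_ofPred_eq, Nat.div_eq_iff hL] at hv
          simp only [coe_Ico, Set.mem_Ico]
          omega
      _ = L := by simp
  · calc #J ≤ #{q : Fin n | L ∣ (q : ℕ)} * (p + 1) :=
          card_biUnion_le_card_mul _ _ _ fun _ _ => hsize _
      _ ≤ (n / L + 1) * (p + 1) := Nat.mul_le_mul_right _ (card_filter_fin_dvd_le n L)
  · obtain ⟨i, hui, hvi⟩ := hedge u v huv
    rcases le_total (σ.symm u) (σ.symm v) with h | h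
    · exact hcut u v i h hui hvi hu
    · exact (hcut v u i h hvi hui hv).symm

theorem HasPathwidthLE.exists_balanced_partial_coloring {n k p L : ℕ}
    {G : SimpleGraph (Fin n)} (hpw : HasPathwidthLE G p) (hcol : G.Colorable k) (hL : 0 < L) :
    ∃ (col : Fin n → Fin k) (J : Finset (Fin n)),
      (∀ u v, G.Adj u v → u ∉ J → v ∉ J → col u ≠ col v) ∧
      (∀ j, #{v | col v = j} ≤ n / k + L) ∧ #J ≤ (n / L + 1) * (p + 1) := by
  obtain ⟨β, J, hβ, hJ, hβadj⟩ := hpw.exists_blocks hL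
  obtain ⟨φ⟩ := hcol
  obtain ⟨π, hπ⟩ := exists_balanced_recoloring φ β hβ
  refine ⟨fun v => (π (β v)).symm (φ v), J, fun u v huv hu hv h => ?_, fun j => ?_, hJ⟩
  · dsimp only at h
    rw [hβadj u v huv hu hv] at h
    exact φ.valid huv ((π _).symm.injective h)
  · have hk : 0 < k := j.pos
    rw [← Nat.add_mul_div_left _ _ hk, Nat.le_div_iff_mul_le hk, mul_comm]
    simpa using hπ j

theorem exists_embedding_sigma_fst_eq {α β : Type*} [Fintype α] [DecidableEq β]
    (f : α → β) (cap : β → ℕ) (h : ∀ b, #{a | f a = b} ≤ cap b) :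
    ∃ e : α ↪ Σ b, Fin (cap b), ∀ a, (e a).1 = f a := by
  have hfiber : ∀ b, Nonempty ({a // f a = b} ↪ Fin (cap b)) := fun b =>
    Function.Embedding.nonempty_of_card_le (by simpa [Fintype.card_subtype] using h b)
  exact ⟨(Equiv.sigmaFiberEquiv f).symm.toEmbedding.trans
    (Function.Embedding.sigmaMap (Function.Embedding.refl β) fun b => (hfiber b).some),
    fun _ => rfl⟩

theorem SimpleGraph.nonempty_embedding_iSup_map {ι V X : Type*} (G : ι → SimpleGraph V)
    (ε : ι → V ↪ X)
    (h : ∀ i j u v a b, (G j).Adj u v → ε j u = ε i a → ε j v = ε i b → (G i).Adj a b)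
    (i : ι) :
    Nonempty (G i ↪g ⨆ j, (G j).map (ε j)) :=
  ⟨⟨ε i, fun {a b} => by
    simp only [SimpleGraph.iSup_adj, SimpleGraph.map_adj]
    exact ⟨fun ⟨j, u, v, huv, hu, hv⟩ => h i j u v a b huv hu hv,
      fun hab => ⟨i, a, b, hab, rfl, rfl⟩⟩⟩⟩

theorem uNumN_le_card {n : ℕ} {F : Set (SimpleGraph (Fin n))} {X : Type*} [Fintype X]
    (U : SimpleGraph X) (hU : ∀ G ∈ F, Nonempty (G ↪g U)) : uNumN F ≤ Fintype.card X :=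
  Nat.sInf_le ⟨U.map (Fintype.equivFin X).toEmbedding, fun G hG =>
    (hU G hG).map fun e => (SimpleGraph.Embedding.map _ U).comp e⟩

theorem HasPathwidthLE.exists_placement {n k p L : ℕ} {G : SimpleGraph (Fin n)}
    (hpw : HasPathwidthLE G p) (hcol : G.Colorable k) (hL : 0 < L) :
    ∃ e : Fin n ↪ Σ b : Fin k ⊕ Unit, Fin (Sum.elim (fun _ => n / k + L)
        (fun _ => (n / L + 1) * (p + 1)) b),
      ∀ u v, G.Adj u v → ∀ i j, (e u).1 = .inl i → (e v).1 = .inl j → i ≠ j := by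
  classical
  obtain ⟨col, J, hproper, hclass, hJ⟩ := hpw.exists_balanced_partial_coloring hcol hL
  set key : Fin n → Fin k ⊕ Unit := fun v => if v ∈ J then .inr () else .inl (col v)
  have hkey_inl : ∀ u j, key u = .inl j ↔ u ∉ J ∧ col u = j := fun u j => by
    by_cases hu : u ∈ J <;> simp [key, hu]
  have hkey_inr : ∀ u, key u = .inr () ↔ u ∈ J := fun u => by
    by_cases hu : u ∈ J <;> simp [key, hu]
  obtain ⟨e, he⟩ := exists_embedding_sigma_fst_eq key
      (Sum.elim (fun _ => n / k + L) fun _ => (n / L + 1) * (p + 1)) <| by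
    rintro (j | ⟨⟩)
    · exact (card_le_card fun v => by simp +contextual [hkey_inl]).trans (hclass j)
    · exact (card_le_card fun v => by simp [hkey_inr]).trans hJ
  refine ⟨e, fun u v huv i j hui hvj => ?_⟩
  obtain ⟨hu, rfl⟩ := (hkey_inl u i).1 (he u ▸ hui)
  obtain ⟨hv, rfl⟩ := (hkey_inl v j).1 (he v ▸ hvj)
  exact hproper u v huv hu hv

theorem uNumN_le_of_colorable_of_hasPathwidthLE {n k s p L : ℕ} (hL : 0 < L)
    {F : Set (SimpleGraph (Fin n))} (τ : F → Fin k ↪ Fin s)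
    (hτ : Pairwise fun G H => (Set.range (τ G) ∩ Set.range (τ H)).Subsingleton)
    (hcol : ∀ G ∈ F, G.Colorable k) (hpw : ∀ G ∈ F, HasPathwidthLE G p) :
    uNumN F ≤ s * (n / k + L) + F.ncard * ((n / L + 1) * (p + 1)) := by
  classical
  have : Fintype F := Fintype.ofFinite F
  choose e he using fun G : F => (hpw G G.2).exists_placement (hcol G G.2) hL
  set cap : Fin s ⊕ F → ℕ := Sum.elim (fun _ => n / k + L) fun _ => (n / L + 1) * (p + 1)
  set col : F → Fin k ⊕ Unit ↪ Fin s ⊕ F := fun G =>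
    (τ G).sumMap (Function.Embedding.punit G)
  set ε : F → Fin n ↪ Σ b, Fin (cap b) := fun G => (e G).trans
    (Function.Embedding.sigmaMap (col G) fun b => Fin.castLEEmb (by cases b <;> rfl))
  have hshared : ∀ G H, H ≠ G → ∀ x y, ε H x = ε G y →
      ∃ i, (e H x).1 = .inl i ∧ τ H i ∈ Set.range (τ G) := by
    intro G H hGH x y h
    have hcol : col H (e H x).1 = col G (e G y).1 := congrArg Sigma.fst h
    rcases hx : (e H x).1 with i | ⟨⟩ <;> rcases hy : (e G y).1 with j | ⟨⟩ <;>
      simp [col, hx, hy, Function.Embedding.punit, hGH] at hcol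
    exact ⟨i, rfl, j, hcol.symm⟩
  have hcompat : ∀ (G H : F) u v a b, (H : SimpleGraph (Fin n)).Adj u v → ε H u = ε G a →
      ε H v = ε G b → (G : SimpleGraph (Fin n)).Adj a b := by
    intro G H u v a b huv hua hvb
    by_cases hGH : H = G
    · subst hGH
      rwa [← (ε H).injective hua, ← (ε H).injective hvb]
    obtain ⟨i, hu, hi⟩ := hshared G H hGH u a hua
    obtain ⟨j, hv, hj⟩ := hshared G H hGH v b hvb
    exact absurd ((τ H).injective (hτ hGH ⟨Set.mem_range_self _, hi⟩
      ⟨Set.mem_range_self _, hj⟩)) (he H u v huv i j hu hv)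
  calc uNumN F ≤ Fintype.card (Σ b, Fin (cap b)) := uNumN_le_card _ fun G hG =>
        SimpleGraph.nonempty_embedding_iSup_map (fun G : F => (G : SimpleGraph (Fin n))) ε
          hcompat ⟨G, hG⟩
    _ = s * (n / k + L) + F.ncard * ((n / L + 1) * (p + 1)) := by
      simp [Fintype.card_sigma, cap]

theorem exists_card_eq_designNumber (s k : ℕ) :
    ∃ 𝒞 : Finset (Finset (Fin s)), 𝒞.card = designNumber s k ∧
      (∀ C ∈ 𝒞, C.card = k) ∧
      ∀ C ∈ 𝒞, ∀ D ∈ 𝒞, C ≠ D → (C ∩ D).card ≤ 1 := by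
  refine (Nat.sSup_mem ?_ ?_ : designNumber s k ∈ _)
  · exact ⟨0, ∅, by simp⟩
  · refine ⟨2 ^ s, ?_⟩
    rintro m ⟨𝒞, rfl, -, -⟩
    simpa using 𝒞.card_le_univ

theorem exists_embeddings_of_ncard_le_designNumber {α : Type*} [Finite α] {F : Set α}
    {s k : ℕ} (hF : F.ncard ≤ designNumber s k) :
    ∃ τ : F → Fin k ↪ Fin s,
      Pairwise fun G H => (Set.range (τ G) ∩ Set.range (τ H)).Subsingleton := by
  classical
  have := Fintype.ofFinite F
  obtain ⟨𝒞, h𝒞card, h𝒞k, h𝒞⟩ := exists_card_eq_designNumber s k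
  obtain ⟨ι⟩ : Nonempty (F ↪ 𝒞) :=
    Function.Embedding.nonempty_of_card_le (by simpa [h𝒞card])
  refine ⟨fun G => ((ι G : Finset (Fin s)).orderEmbOfFin (h𝒞k _ (ι G).2)).toEmbedding,
    fun G H hGH => ?_⟩
  simp only [RelEmbedding.coe_toEmbedding, range_orderEmbOfFin, ← coe_inter]
  exact card_le_one.1 (h𝒞 _ (ι G).2 _ (ι H).2 fun h => hGH (ι.injective (Subtype.ext h)))

theorem div_sqrt_mul_add_one_mul_le (n q : ℕ) :
    (n / (Nat.sqrt (n * q) + 1) + 1) * q ≤ Nat.sqrt (n * q) + 1 + q := by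
  set L := Nat.sqrt (n * q) + 1
  have hq : n / L * q * L < L * L :=
    calc n / L * q * L = n / L * L * q := by ring
      _ ≤ n * q := Nat.mul_le_mul_right _ (Nat.div_mul_le_self _ _)
      _ < L * L := Nat.lt_succ_sqrt _
  have := Nat.lt_of_mul_lt_mul_right hq
  rw [add_mul, one_mul]
  omega

theorem uNumN_le_of_ncard_le_designNumber {n k s p : ℕ} {F : Set (SimpleGraph (Fin n))}
    (hF : F.ncard ≤ designNumber s k) (hcol : ∀ G ∈ F, G.Colorable k)
    (hpw : ∀ G ∈ F, HasPathwidthLE G p) :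
    (uNumN F : ℝ) ≤
      s / k * n + (s + designNumber s k) * (Nat.sqrt (n * (p + 1)) + 1 + (p + 1)) := by
  obtain ⟨τ, hτ⟩ := exists_embeddings_of_ncard_le_designNumber hF
  have hU := uNumN_le_of_colorable_of_hasPathwidthLE (Nat.succ_pos (Nat.sqrt (n * (p + 1))))
    τ hτ hcol hpw
  have hjunk := Nat.mul_le_mul hF (div_sqrt_mul_add_one_mul_le n (p + 1))
  have hnat : uNumN F ≤
      s * (n / k) + (s + designNumber s k) * (Nat.sqrt (n * (p + 1)) + 1 + (p + 1)) := by
    nlinarith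
  calc (uNumN F : ℝ) ≤
        s * (n / k : ℕ) + (s + designNumber s k) * (Nat.sqrt (n * (p + 1)) + 1 + (p + 1)) := by
        exact_mod_cast hnat
    _ ≤ _ := by
      gcongr ?_ + _
      calc (s : ℝ) * (n / k : ℕ) ≤ s * (n / k) := by gcongr; exact Nat.cast_div_le
        _ = s / k * n := by ring

theorem isLittleO_natSqrt_mul {u : ℕ → ℕ}
    (hu : (fun n => (u n : ℝ)) =o[atTop] fun n => (n : ℝ)) :
    (fun n => (Nat.sqrt (n * u n) : ℝ)) =o[atTop] fun n => (n : ℝ) := by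
  refine isLittleO_iff.2 fun δ hδ => ?_
  filter_upwards [isLittleO_iff.1 hu (pow_pos hδ 2)] with n hn
  simp only [Real.norm_natCast] at hn ⊢
  calc (Nat.sqrt (n * u n) : ℝ) ≤ √((n * u n : ℕ) : ℝ) := Real.nat_sqrt_le_real_sqrt
    _ ≤ √((δ * n) ^ 2) := Real.sqrt_le_sqrt (by push_cast; nlinarith)
    _ = δ * n := Real.sqrt_sq (by positivity)

theorem isLittleO_natSqrt_add_of_isLittleO_mul {p : ℕ → ℕ} {k : ℕ} (hk : 0 < k)
    (ho : (fun n => ((p n * k : ℕ) : ℝ)) =o[atTop] fun n => (n : ℝ)) :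
    (fun n => (Nat.sqrt (n * (p n + 1)) + 1 + (p n + 1) : ℝ)) =o[atTop] fun n => (n : ℝ) := by
  have hone : (fun _ => (1 : ℝ)) =o[atTop] fun n : ℕ => (n : ℝ) :=
    (isLittleO_one_left_iff ℝ).2 (by simpa using tendsto_natCast_atTop_atTop)
  have hp : (fun n => ((p n + 1 : ℕ) : ℝ)) =o[atTop] fun n : ℕ => (n : ℝ) := by
    refine ((isBigO_of_le (f := fun n => (p n : ℝ)) _ fun n => ?_).trans_isLittleO ho).add hone
      |>.congr_left ?_
    · simpa using (Nat.cast_le (α := ℝ)).2 (Nat.le_mul_of_pos_right (p n) hk)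
    · simp
  simpa [add_assoc] using ((isLittleO_natSqrt_mul hp).add hone).add hp

theorem stmt12 (k : ℕ) (hk : 2 ≤ k) (c : ℝ) (hc : 0 < c)
    (F : ∀ n : ℕ, Set (SimpleGraph (Fin n))) (p : ℕ → ℕ)
    (hcol : ∀ n, ∀ G ∈ F n, G.Colorable k)
    (hpw : ∀ n, ∀ G ∈ F n, HasPathwidthLE G (p n))
    (ho : (fun n : ℕ => ((p n * k : ℕ) : ℝ)) =o[Filter.atTop] (fun n : ℕ => (n : ℝ)))
    (err : ℕ → ℝ) (herr : err =o[Filter.atTop] (fun n : ℕ => (n : ℝ)))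
    (hlb : ∀ n : ℕ, c * (n : ℝ) - err n ≤ (uNumN (F n) : ℝ)) :
    ∀ᶠ n : ℕ in Filter.atTop,
      designNumber (⌈c * (k : ℝ)⌉₊ - 1) k < (F n).ncard := by
  set s := ⌈c * (k : ℝ)⌉₊ - 1
  have hs : (s : ℝ) / k < c := by
    have hceil : 1 ≤ ⌈c * (k : ℝ)⌉₊ := Nat.one_le_ceil_iff.mpr (by positivity)
    rw [div_lt_iff₀ (by positivity), Nat.cast_sub hceil, Nat.cast_one]
    linarith [Nat.ceil_lt_add_one (by positivity : 0 ≤ c * k)]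
  have hover := isLittleO_natSqrt_add_of_isLittleO_mul (by omega) ho
  filter_upwards [isLittleO_iff.1 (herr.add (hover.const_mul_left (s + designNumber s k)))
    (half_pos (sub_pos.2 hs)), eventually_gt_atTop 0] with n hn hn0
  by_contra! hF
  have hU := uNumN_le_of_ncard_le_designNumber hF (hcol n) (hpw n)
  have hpos : 0 < (c - s / k) / 2 * n := by have := sub_pos.2 hs; positivity
  rw [Real.norm_natCast, Real.norm_eq_abs] at hn
  linarith [le_abs_self (err n + (s + designNumber s k) *
    (Nat.sqrt (n * (p n + 1)) + 1 + (p n + 1) : ℝ)), hlb n]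
end

section
/- Let n be a positive integer with n² ≥ 811. Every family of at most n² graphs, each having exactly n vertices, has an induced-universal graph with fewer than 15·n²/7 vertices. -/
/-!
Take a prime `p` with `n < p ≤ 2n` and regard the vertex set `Fin n` as a subset of `𝔽_p`.
On `Fin n × 𝔽_p`, place a copy of each graph of the family on the graph of its own affine
function `v ↦ a v + b`, where distinct graphs receive distinct pairs `(a, b)`; there are `p²`
such pairs. Two distinct lines meet in at most one point, so no other copy contributes an
edge between two vertices of a given copy, and each copy is an induced subgraph. This graph has
`n p ≤ 2n² < 15n²/7` vertices.
-/

open Function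

namespace SimpleGraph

variable {V W K : Type*}

def IsInducedUniversal (U : SimpleGraph W) (F : Set (SimpleGraph V)) : Prop :=
  ∀ G ∈ F, Nonempty (G ↪g U)

lemma IsInducedUniversal.mono {U : SimpleGraph W} {F F' : Set (SimpleGraph V)}
    (hU : U.IsInducedUniversal F) (hF' : F' ⊆ F) : U.IsInducedUniversal F' :=
  fun G hG => hU G (hF' hG)

lemma IsInducedUniversal.exists_fin [Fintype W] {U : SimpleGraph W} {F : Set (SimpleGraph V)}
    (hU : U.IsInducedUniversal F) :
    ∃ U' : SimpleGraph (Fin (Fintype.card W)), U'.IsInducedUniversal F := by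
  let e := Fintype.equivFin W
  exact ⟨U.map e.toEmbedding, fun G hG =>
    (hU G hG).map fun φ => (Iso.map e U).toEmbedding.comp φ⟩

lemma line_eq_of_two_points [CommRing K] [NoZeroDivisors K] {a b a' b' x y : K} (hxy : x ≠ y)
    (hx : a * x + b = a' * x + b') (hy : a * y + b = a' * y + b') : (a, b) = (a', b') := by
  have hslope : (a - a') * (x - y) = 0 := by linear_combination hx - hy
  have ha : a = a' := sub_eq_zero.mp ((mul_eq_zero.mp hslope).resolve_right (sub_ne_zero.mpr hxy))
  subst ha
  rw [add_left_cancel hx]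

variable [CommRing K]

def lineGluing (f : V → K) (G : K × K → SimpleGraph V) : SimpleGraph (V × K) where
  Adj x y := ∃ ℓ : K × K, x.2 = ℓ.1 * f x.1 + ℓ.2 ∧ y.2 = ℓ.1 * f y.1 + ℓ.2 ∧ (G ℓ).Adj x.1 y.1
  symm := ⟨fun _ _ ⟨ℓ, hx, hy, h⟩ => ⟨ℓ, hy, hx, h.symm⟩⟩
  loopless := ⟨fun _ ⟨_, _, _, h⟩ => h.ne rfl⟩

def lineGluing.embedding [NoZeroDivisors K] {f : V → K} (hf : Injective f)
    (G : K × K → SimpleGraph V) (ℓ : K × K) : G ℓ ↪g lineGluing f G where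
  toFun v := (v, ℓ.1 * f v + ℓ.2)
  inj' := fun _ _ h => congrArg Prod.fst h
  map_rel_iff' := by
    intro v w
    show (lineGluing f G).Adj (v, _) (w, _) ↔ _
    constructor
    · rintro ⟨ℓ', hv, hw, hadj⟩
      obtain rfl : ℓ = ℓ' := line_eq_of_two_points (hf.ne hadj.ne) hv hw
      exact hadj
    · exact fun hadj => ⟨ℓ, rfl, rfl, hadj⟩

lemma isInducedUniversal_lineGluing [NoZeroDivisors K] {f : V → K} (hf : Injective f)
    (G : K × K → SimpleGraph V) : (lineGluing f G).IsInducedUniversal (Set.range G) := by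
  rintro _ ⟨ℓ, rfl⟩
  exact ⟨lineGluing.embedding hf G ℓ⟩

theorem exists_isInducedUniversal_prod [Fintype V] [NoZeroDivisors K] [Fintype K]
    (hV : Fintype.card V ≤ Fintype.card K) {F : Set (SimpleGraph V)}
    (hF : F.ncard ≤ Fintype.card K ^ 2) :
    ∃ U : SimpleGraph (V × K), U.IsInducedUniversal F := by
  have : Fintype F := Fintype.ofFinite F
  have hFK : Fintype.card F ≤ Fintype.card (K × K) := by
    rw [Fintype.card_prod, ← sq, ← Nat.card_eq_fintype_card, Nat.card_coe_set_eq]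
    exact hF
  obtain ⟨f⟩ := Function.Embedding.nonempty_of_card_le hV
  obtain ⟨ι⟩ := Function.Embedding.nonempty_of_card_le hFK
  -- Graphs of `F` are labelled by distinct lines; the remaining lines carry the empty graph.
  let G : K × K → SimpleGraph V := extend ι Subtype.val fun _ => ⊥
  refine ⟨lineGluing f G, (isInducedUniversal_lineGluing f.injective G).mono ?_⟩
  intro H hH
  exact ⟨ι ⟨H, hH⟩, ι.injective.extend_apply _ _ _⟩

end SimpleGraph

theorem stmt15_general (n : ℕ) (hn : 0 < n)
    (F : Set (SimpleGraph (Fin n))) (hcard : F.ncard ≤ n ^ 2) :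
    ∃ (N : ℕ) (U : SimpleGraph (Fin N)),
      (N : ℝ) < 15 * (n : ℝ) ^ 2 / 7 ∧ ∀ G ∈ F, Nonempty (G ↪g U) := by
  obtain ⟨p, hp, hnp, hp2n⟩ := Nat.exists_prime_lt_and_le_two_mul n hn.ne'
  have : Fact p.Prime := ⟨hp⟩
  have hcardK : Fintype.card (ZMod p) = p := ZMod.card p
  obtain ⟨U, hU⟩ := SimpleGraph.exists_isInducedUniversal_prod (K := ZMod p)
    (by simpa [hcardK] using hnp.le) (hcard.trans (by rw [hcardK]; gcongr))
  obtain ⟨U', hU'⟩ := hU.exists_fin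
  refine ⟨_, U', ?_, hU'⟩
  have hp2n' : (p : ℝ) ≤ 2 * n := by exact_mod_cast hp2n
  have hn' : (0 : ℝ) < n := by exact_mod_cast hn
  rw [Fintype.card_prod, Fintype.card_fin, hcardK]
  push_cast
  nlinarith

theorem stmt15 (n : ℕ) (hn : 0 < n) (h811 : 811 ≤ n ^ 2)
    (F : Set (SimpleGraph (Fin n))) (hcard : F.ncard ≤ n ^ 2) :
    ∃ (N : ℕ) (U : SimpleGraph (Fin N)),
      (N : ℝ) < 15 * (n : ℝ) ^ 2 / 7 ∧ ∀ G ∈ F, Nonempty (G ↪g U) :=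
  stmt15_general n hn F hcard
end

section
/- Let s and k be integers such that s is prime and 2 ≤ k ≤ s. Then A(s·k, 2k−2, k) ≥ s² + k·A(s, 2k−2, k). -/
open Finset

variable {α β ι F : Type*} [DecidableEq α] [DecidableEq β] [DecidableEq ι] {k n : ℕ}

def IsPacking (k : ℕ) (𝒞 : Finset (Finset α)) : Prop :=
  (∀ C ∈ 𝒞, #C = k) ∧ ∀ C ∈ 𝒞, ∀ D ∈ 𝒞, C ≠ D → #(C ∩ D) ≤ 1

namespace IsPacking

theorem map {𝒞 : Finset (Finset α)} (h : IsPacking k 𝒞) (e : α ↪ β) :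
    IsPacking k (𝒞.map (mapEmbedding e).toEmbedding) := by
  refine ⟨?_, ?_⟩
  · simp only [mem_map, RelEmbedding.coe_toEmbedding, mapEmbedding_apply]
    rintro _ ⟨C, hC, rfl⟩
    rw [card_map, h.1 C hC]
  · simp only [mem_map, RelEmbedding.coe_toEmbedding, mapEmbedding_apply]
    rintro _ ⟨C, hC, rfl⟩ _ ⟨D, hD, rfl⟩ hne
    rw [← map_inter, card_map]
    exact h.2 C hC D hD (ne_of_apply_ne _ hne)

theorem nonempty {𝒞 : Finset (Finset α)} (h : IsPacking k 𝒞) (hk : k ≠ 0) :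
    ∀ C ∈ 𝒞, C.Nonempty :=
  fun C hC => card_ne_zero.1 (h.1 C hC ▸ hk)

theorem union {𝒜 ℬ : Finset (Finset α)} (h𝒜 : IsPacking k 𝒜) (hℬ : IsPacking k ℬ)
    (hcross : ∀ A ∈ 𝒜, ∀ B ∈ ℬ, #(A ∩ B) ≤ 1) : IsPacking k (𝒜 ∪ ℬ) := by
  refine ⟨fun C hC => (mem_union.1 hC).elim (h𝒜.1 C) (hℬ.1 C), ?_⟩
  intro C hC D hD hne
  rcases mem_union.1 hC with hC | hC <;> rcases mem_union.1 hD with hD | hD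
  · exact h𝒜.2 C hC D hD hne
  · exact hcross C hC D hD
  · exact inter_comm C D ▸ hcross D hD C hC
  · exact hℬ.2 C hC D hD hne

end IsPacking

-- `designNumber n k` is `sSup (packingSizes n k)` by definition.
def packingSizes (n k : ℕ) : Set ℕ :=
  {m | ∃ 𝒞 : Finset (Finset (Fin n)), #𝒞 = m ∧ IsPacking k 𝒞}

theorem bddAbove_packingSizes (n k : ℕ) : BddAbove (packingSizes n k) :=
  ⟨Fintype.card (Finset (Fin n)), by rintro m ⟨𝒞, rfl, -⟩; exact card_le_univ 𝒞⟩

theorem IsPacking.card_le_designNumber [Fintype α] (hα : Fintype.card α = n)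
    {𝒞 : Finset (Finset α)} (h : IsPacking k 𝒞) : #𝒞 ≤ designNumber n k :=
  le_csSup (bddAbove_packingSizes n k)
    ⟨_, card_map _, h.map (Fintype.equivFinOfCardEq hα).toEmbedding⟩

theorem exists_isPacking_card_eq_designNumber [Fintype α] (hα : Fintype.card α = n) (k : ℕ) :
    ∃ 𝒞 : Finset (Finset α), IsPacking k 𝒞 ∧ #𝒞 = designNumber n k := by
  obtain ⟨𝒞, hcard, h⟩ : designNumber n k ∈ packingSizes n k :=
    Nat.sSup_mem ⟨0, ∅, rfl, by simp [IsPacking]⟩ (bddAbove_packingSizes n k)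
  exact ⟨_, h.map (Fintype.equivFinOfCardEq hα).symm.toEmbedding, (card_map _).trans hcard⟩

theorem singleton_product_injOn :
    Set.InjOn (fun p : ι × Finset β => {p.1} ×ˢ p.2) {p | p.2.Nonempty} := by
  rintro ⟨i, D⟩ hD ⟨i', D'⟩ - h
  have hDD' : D = D' := by
    simpa only [product_image_snd (singleton_nonempty _)] using congrArg (image Prod.snd) h
  subst hDD'
  have hii' := congrArg (image Prod.fst) h
  simp only [product_image_fst hD, singleton_inj] at hii'
  rw [hii']

section Construction

variable [Fintype ι]

variable (ι) in
def fiberCopies (𝒟 : Finset (Finset β)) : Finset (Finset (ι × β)) :=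
  (univ ×ˢ 𝒟).image fun p => {p.1} ×ˢ p.2

theorem card_fiberCopies {𝒟 : Finset (Finset β)} (h𝒟 : ∀ D ∈ 𝒟, D.Nonempty) :
    #(fiberCopies ι 𝒟) = Fintype.card ι * #𝒟 := by
  rw [fiberCopies, card_image_of_injOn, card_product, card_univ]
  exact singleton_product_injOn.mono fun p hp => h𝒟 _ (mem_product.1 hp).2

theorem IsPacking.fiberCopies {𝒟 : Finset (Finset β)} (h : IsPacking k 𝒟) :
    IsPacking k (fiberCopies ι 𝒟) := by
  simp only [IsPacking, _root_.fiberCopies, mem_image, mem_product, mem_univ, true_and]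
  refine ⟨?_, ?_⟩
  · rintro _ ⟨⟨i, D⟩, hD, rfl⟩
    simp [h.1 D hD]
  · rintro _ ⟨⟨i, D⟩, hD, rfl⟩ _ ⟨⟨i', D'⟩, hD', rfl⟩ hne
    rw [product_inter_product, card_product]
    by_cases hDD' : D = D'
    · subst hDD'
      have hii' : i ≠ i' := fun hii' => hne (by rw [hii'])
      simp [hii']
    · exact mul_le_one' (card_le_one.2 fun _ ha _ hb => by simp_all)
        (h.2 D hD D' hD' hDD')

def graph (f : ι → β) : Finset (ι × β) :=
  univ.image fun i => (i, f i)

@[simp]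
theorem mem_graph {f : ι → β} {p : ι × β} : p ∈ graph f ↔ f p.1 = p.2 := by
  simp [graph, Prod.ext_iff, eq_comm]

theorem card_graph (f : ι → β) : #(graph f) = Fintype.card ι :=
  card_image_of_injective _ fun _ _ h => congrArg Prod.fst h

theorem graph_injective : Function.Injective (graph : (ι → β) → Finset (ι × β)) := by
  intro f g h
  funext i
  exact (mem_graph.1 ((Finset.ext_iff.1 h (i, f i)).1 (mem_graph.2 rfl))).symm

theorem card_graph_inter_graph_le_one {f g : ι → β}
    (h : ∀ i j, f i = g i → f j = g j → i = j) : #(graph f ∩ graph g) ≤ 1 := by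
  refine card_le_one.2 fun p hp q hq => ?_
  simp only [mem_inter, mem_graph] at hp hq
  have hpq : p.1 = q.1 := h _ _ (hp.1.trans hp.2.symm) (hq.1.trans hq.2.symm)
  exact Prod.ext hpq (by rw [← hp.1, ← hq.1, hpq])

theorem card_graph_inter_fiber_le_one (f : ι → β) (i : ι) (D : Finset β) :
    #(graph f ∩ {i} ×ˢ D) ≤ 1 := by
  refine card_le_one.2 fun p hp q hq => ?_
  simp only [mem_inter, mem_graph, mem_product, mem_singleton] at hp hq
  have hpq : p.1 = q.1 := hp.2.1.trans hq.2.1.symm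
  exact Prod.ext hpq (by rw [← hp.1, ← hq.1, hpq])

theorem graph_ne_fiber [Nontrivial ι] (f : ι → β) (i : ι) (D : Finset β) :
    graph f ≠ {i} ×ˢ D := by
  obtain ⟨j, hji⟩ := exists_ne i
  intro h
  have := h ▸ mem_graph.2 (rfl : f (j, f j).1 = f j)
  exact hji (mem_singleton.1 (mem_product.1 this).1)

variable [Field F]

theorem affine_coeffs_eq_of_ne {a b a' b' x y : F} (hxy : x ≠ y)
    (hx : a + b * x = a' + b' * x) (hy : a + b * y = a' + b' * y) : a = a' ∧ b = b' := by
  have hb : b = b' := by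
    have : (b - b') * (x - y) = 0 := by linear_combination hx - hy
    simpa [sub_eq_zero, hxy] using this
  subst hb
  exact ⟨add_right_cancel hx, rfl⟩

variable [DecidableEq F]

theorem affineLine_injective [Nontrivial ι] (c : ι ↪ F) :
    Function.Injective fun p : F × F => graph fun i => p.1 + p.2 * c i := by
  rintro ⟨a, b⟩ ⟨a', b'⟩ h
  obtain ⟨i, j, hij⟩ := exists_pair_ne ι
  have hf := graph_injective h
  obtain ⟨rfl, rfl⟩ :=
    affine_coeffs_eq_of_ne (c.injective.ne hij) (congrFun hf i) (congrFun hf j)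
  rfl

variable [Fintype F]

def affineLines (c : ι ↪ F) : Finset (Finset (ι × F)) :=
  univ.image fun p : F × F => graph fun i => p.1 + p.2 * c i

theorem card_affineLines [Nontrivial ι] (c : ι ↪ F) :
    #(affineLines c) = Fintype.card F ^ 2 := by
  rw [affineLines, card_image_of_injective _ (affineLine_injective c), card_univ,
    Fintype.card_prod, sq]

theorem isPacking_affineLines (c : ι ↪ F) : IsPacking (Fintype.card ι) (affineLines c) := by
  simp only [IsPacking, affineLines, mem_image, mem_univ, true_and]
  refine ⟨?_, ?_⟩
  · rintro _ ⟨p, rfl⟩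
    exact card_graph _
  · rintro _ ⟨⟨a, b⟩, rfl⟩ _ ⟨⟨a', b'⟩, rfl⟩ hne
    refine card_graph_inter_graph_le_one fun i j hi hj => ?_
    by_contra hij
    obtain ⟨rfl, rfl⟩ := affine_coeffs_eq_of_ne (c.injective.ne hij) hi hj
    exact hne rfl

theorem disjoint_affineLines_fiberCopies [Nontrivial ι] (c : ι ↪ F) (𝒟 : Finset (Finset F)) :
    Disjoint (affineLines c) (fiberCopies ι 𝒟) := by
  simp only [disjoint_left, affineLines, fiberCopies, mem_image, not_exists, not_and]
  rintro _ ⟨p, -, rfl⟩ q - h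
  exact graph_ne_fiber _ _ _ h.symm

theorem isPacking_affineLines_union_fiberCopies (c : ι ↪ F) {𝒟 : Finset (Finset F)}
    (h𝒟 : IsPacking (Fintype.card ι) 𝒟) :
    IsPacking (Fintype.card ι) (affineLines c ∪ fiberCopies ι 𝒟) := by
  refine (isPacking_affineLines c).union h𝒟.fiberCopies ?_
  simp only [affineLines, fiberCopies, mem_image]
  rintro _ ⟨p, -, rfl⟩ _ ⟨q, -, rfl⟩
  exact card_graph_inter_fiber_le_one _ _ _

theorem card_affineLines_union_fiberCopies [Nontrivial ι] (c : ι ↪ F)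
    {𝒟 : Finset (Finset F)} (h𝒟 : ∀ D ∈ 𝒟, D.Nonempty) :
    #(affineLines c ∪ fiberCopies ι 𝒟) = Fintype.card F ^ 2 + Fintype.card ι * #𝒟 := by
  rw [card_union_of_disjoint (disjoint_affineLines_fiberCopies c 𝒟), card_affineLines,
    card_fiberCopies h𝒟]

end Construction

theorem stmt16 (s k : ℕ) (hs : s.Prime) (hk2 : 2 ≤ k) (hks : k ≤ s) :
    s ^ 2 + k * designNumber s k ≤ designNumber (s * k) k := by
  have : Fact s.Prime := ⟨hs⟩
  have : Nontrivial (Fin k) := Fin.nontrivial_iff_two_le.2 hk2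
  let c : Fin k ↪ ZMod s := (Fin.castLEEmb hks).trans (ZMod.finEquiv s).toEmbedding
  obtain ⟨𝒟, h𝒟, h𝒟card⟩ :=
    exists_isPacking_card_eq_designNumber (ZMod.card s) (Fintype.card (Fin k))
  calc s ^ 2 + k * designNumber s k = #(affineLines c ∪ fiberCopies (Fin k) 𝒟) := by
        rw [card_affineLines_union_fiberCopies c (h𝒟.nonempty Fintype.card_ne_zero), ZMod.card,
          h𝒟card, Fintype.card_fin]
    _ ≤ designNumber (s * k) k := by
        simpa using (isPacking_affineLines_union_fiberCopies c h𝒟).card_le_designNumber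
          (n := s * k) (by simp [ZMod.card, mul_comm])
end
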